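/- arXiv:2008.11113 — 7 statements merged into one kernel-verified Lean document; each statement's English description precedes it below -/
import Mathlib

section
/- Let 0 < α < 1 and let g : [a,b] → ℝ be an integrable, non-decreasing function with g(a) ≥ 0. Then the Riemann-Liouville fractional integral G(x) = (1/Γ(α)) ∫ₐˣ (x-t)^{α-1} g(t) dt is a non-decreasing function of x on [a,b]. -/
open MeasureTheory intervalIntegral

noncomputable def RL (a α : ℝ) (f : ℝ → ℝ) : ℝ → ℝ :=
  fun x => (1 / Real.Gamma α) * ∫ t in a..x, (x - t) ^ (α - 1) * f t

theorem stmt_2 (a b α : ℝ) (hab : a ≤ b) (hα : 0 < α) (hα1 : α < 1) (g : ℝ → ℝ)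
    (hint : IntervalIntegrable g MeasureTheory.volume a b)
    (hmono : MonotoneOn g (Set.Icc a b)) (hga : 0 ≤ g a) :
    MonotoneOn (RL a α g) (Set.Icc a b) := by
  have hΓ : 0 < Real.Gamma α := Real.Gamma_pos_of_pos hα
  -- substitution: the RL integral at z equals ∫ s in 0..(z-a), s^(α-1) * g (z - s)
  have sub : ∀ z : ℝ, (∫ t in a..z, (z - t) ^ (α - 1) * g t)
      = ∫ s in (0:ℝ)..(z - a), s ^ (α - 1) * g (z - s) := by
    intro z
    have h := intervalIntegral.integral_comp_sub_left
      (fun s => s ^ (α - 1) * g (z - s)) z (a := a) (b := z)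
    simp only [sub_sub_cancel, sub_self] at h
    exact h
  -- integrability of the substituted integrand
  have key : ∀ y, y ∈ Set.Icc a b → ∀ c d : ℝ, 0 ≤ c → c ≤ d → d ≤ y - a →
      IntervalIntegrable (fun s => s ^ (α - 1) * g (y - s)) MeasureTheory.volume c d := by
    intro y hy c d hc hcd hd
    rw [intervalIntegrable_iff, Set.uIoc_of_le hcd]
    have hmem : ∀ s ∈ Set.Ioc c d, y - s ∈ Set.Icc a b := by
      intro s hs
      constructor
      · linarith [hs.2]
      · have : 0 < s := lt_of_le_of_lt hc hs.1
        linarith [hy.2]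
    have hker : MeasureTheory.IntegrableOn (fun s : ℝ => s ^ (α - 1))
        (Set.Ioc c d) MeasureTheory.volume := by
      have := intervalIntegral.intervalIntegrable_rpow' (a := c) (b := d)
        (r := α - 1) (by linarith)
      rwa [intervalIntegrable_iff, Set.uIoc_of_le hcd] at this
    have hanti : AntitoneOn (fun s => g (y - s)) (Set.Ioc c d) := by
      intro s1 hs1 s2 hs2 h12
      exact hmono (hmem s2 hs2) (hmem s1 hs1) (by linarith)
    have hmeas : AEStronglyMeasurable (fun s => g (y - s))
        (MeasureTheory.volume.restrict (Set.Ioc c d)) :=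
      (aemeasurable_restrict_of_antitoneOn measurableSet_Ioc hanti).aestronglyMeasurable
    have hbdd : ∀ᵐ s ∂(MeasureTheory.volume.restrict (Set.Ioc c d)),
        ‖g (y - s)‖ ≤ max |g a| |g b| := by
      refine MeasureTheory.ae_restrict_of_forall_mem measurableSet_Ioc ?_
      intro s hs
      have h1 : g a ≤ g (y - s) :=
        hmono (Set.left_mem_Icc.2 hab) (hmem s hs) (hmem s hs).1
      have h2 : g (y - s) ≤ g b :=
        hmono (hmem s hs) (Set.right_mem_Icc.2 hab) (hmem s hs).2
      simpa using abs_le_max_abs_abs h1 h2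
    have := hker.bdd_mul hmeas hbdd
    exact this.congr (Filter.EventuallyEq.of_eq (funext fun s => mul_comm _ _))
  intro x hx y hy hxy
  show (1 / Real.Gamma α) * _ ≤ (1 / Real.Gamma α) * _
  have hc : 0 ≤ 1 / Real.Gamma α := by positivity
  refine mul_le_mul_of_nonneg_left ?_ hc
  rw [sub x, sub y]
  have h1 : IntervalIntegrable (fun s => s ^ (α - 1) * g (x - s))
      MeasureTheory.volume 0 (x - a) := by
    have : x - a ≤ x - a := le_rfl
    exact key x hx 0 (x - a) le_rfl (by linarith [hx.1]) this
  have h2 : IntervalIntegrable (fun s => s ^ (α - 1) * g (y - s))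
      MeasureTheory.volume 0 (x - a) :=
    key y hy 0 (x - a) le_rfl (by linarith [hx.1]) (by linarith)
  have h3 : IntervalIntegrable (fun s => s ^ (α - 1) * g (y - s))
      MeasureTheory.volume (x - a) (y - a) :=
    key y hy (x - a) (y - a) (by linarith [hx.1]) (by linarith) le_rfl
  have hsplit : (∫ s in (0:ℝ)..(y - a), s ^ (α - 1) * g (y - s))
      = (∫ s in (0:ℝ)..(x - a), s ^ (α - 1) * g (y - s))
        + ∫ s in (x - a)..(y - a), s ^ (α - 1) * g (y - s) :=
    (intervalIntegral.integral_add_adjacent_intervals h2 h3).symm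
  rw [hsplit]
  have step1 : (∫ s in (0:ℝ)..(x - a), s ^ (α - 1) * g (x - s))
      ≤ ∫ s in (0:ℝ)..(x - a), s ^ (α - 1) * g (y - s) := by
    refine intervalIntegral.integral_mono_on (by linarith [hx.1]) h1 h2 ?_
    intro s hs
    have hxs : x - s ∈ Set.Icc a b := ⟨by linarith [hs.2], by linarith [hs.1, hx.2]⟩
    have hys : y - s ∈ Set.Icc a b := ⟨by linarith [hs.2], by linarith [hs.1, hy.2]⟩
    have hgs : g (x - s) ≤ g (y - s) := hmono hxs hys (by linarith)
    exact mul_le_mul_of_nonneg_left hgs (Real.rpow_nonneg hs.1 _)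
  have step2 : 0 ≤ ∫ s in (x - a)..(y - a), s ^ (α - 1) * g (y - s) := by
    refine intervalIntegral.integral_nonneg (by linarith) ?_
    intro s hs
    have hys : y - s ∈ Set.Icc a b := ⟨by linarith [hs.2], by linarith [hs.1, hx.1, hy.2]⟩
    have hgs : 0 ≤ g (y - s) :=
      le_trans hga (hmono (Set.left_mem_Icc.2 hab) hys hys.1)
    exact mul_nonneg (Real.rpow_nonneg (by linarith [hs.1, hx.1]) _) hgs
  linarith
end

section
/- Let 0 < α < 1 and let g : [a,b] → ℝ be non-decreasing with g(a) ≥ 0, and let a ≤ x ≤ y ≤ b. Then Γ(α)·(G(y) - G(x)) = ∫ₐ^{y-x+a} (y-t)^{α-1} g(t) dt + ∫_{y-x+a}^{y} (y-t)^{α-1} [g(t) - g(t+x-y)] dt, where G(z) = (1/Γ(α)) ∫ₐᶻ (z-t)^{α-1} g(t) dt; in particular both integrands are non-negative. -/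
theorem stmt_3 (a b α : ℝ) (hα : 0 < α) (hα1 : α < 1) (g : ℝ → ℝ)
    (hmono : MonotoneOn g (Set.Icc a b)) (hga : 0 ≤ g a)
    (x y : ℝ) (hax : a ≤ x) (hxy : x ≤ y) (hyb : y ≤ b) :
    Real.Gamma α * (RL a α g y - RL a α g x) =
      (∫ t in a..(y - x + a), (y - t) ^ (α - 1) * g t) +
      (∫ t in (y - x + a)..y, (y - t) ^ (α - 1) * (g t - g (t + x - y))) ∧
    (∀ t ∈ Set.Icc a (y - x + a), 0 ≤ (y - t) ^ (α - 1) * g t) ∧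
    (∀ t ∈ Set.Icc (y - x + a) y, 0 ≤ (y - t) ^ (α - 1) * (g t - g (t + x - y))) := by
  have hab : a ≤ b := le_trans hax (le_trans hxy hyb)
  have hay : a ≤ y := le_trans hax hxy
  set c : ℝ := y - x + a with hc
  have hac : a ≤ c := by simp [hc]; linarith
  have hcy : c ≤ y := by simp [hc]; linarith
  -- extended g
  set g' : ℝ → ℝ := fun t => g (min b (max a t)) with hg'
  have hclamp : ∀ t, min b (max a t) ∈ Set.Icc a b := by
    intro t
    constructor
    · exact le_min hab (le_max_left _ _)
    · exact min_le_left _ _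
  have hg'mono : Monotone g' := by
    intro s t hst
    exact hmono (hclamp s) (hclamp t)
      (min_le_min le_rfl (max_le_max le_rfl hst))
  have hg'eq : ∀ t ∈ Set.Icc a b, g' t = g t := by
    intro t ht
    simp [hg', max_eq_right ht.1, min_eq_right ht.2]
  have hg'bound : ∀ t, |g' t| ≤ |g a| + |g b| := by
    intro t
    have h1 : g a ≤ g' t := hmono (Set.left_mem_Icc.2 hab) (hclamp t)
      (le_min hab (le_max_left _ _))
    have h2 : g' t ≤ g b := hmono (hclamp t) (Set.right_mem_Icc.2 hab)
      (min_le_left _ _)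
    rw [abs_le]
    constructor
    · nlinarith [neg_abs_le (g a), abs_nonneg (g b)]
    · nlinarith [le_abs_self (g b), abs_nonneg (g a)]
  set C : ℝ := |g a| + |g b| with hC
  have hC0 : 0 ≤ C := by positivity
  have hαm : (-1 : ℝ) < α - 1 := by linarith
  -- dominating function integrable
  have hdom : IntervalIntegrable (fun t => C * (y - t) ^ (α - 1)) MeasureTheory.volume a y := by
    have h1 : IntervalIntegrable (fun t : ℝ => t ^ (α - 1)) MeasureTheory.volume (y - a) (y - y) :=
      intervalIntegral.intervalIntegrable_rpow' hαm
    have h2 := (h1.comp_sub_left y)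
    simp only [sub_sub_cancel] at h2
    exact h2.const_mul C
  have hg'meas : Measurable g' := hg'mono.measurable
  have hmeas1 : Measurable (fun t => (y - t) ^ (α - 1) * g' t) := by
    exact ((measurable_const.sub measurable_id).pow_const _).mul hg'meas
  have hmeas2 : Measurable (fun t => (y - t) ^ (α - 1) * g' (t + x - y)) := by
    exact ((measurable_const.sub measurable_id).pow_const _).mul
      (hg'meas.comp ((measurable_id.add_const x).sub_const y))
  -- key integrability on a..y for the two integrands, via domination
  have hbound : ∀ h : ℝ → ℝ, (∀ t, |h t| ≤ C) → Measurable (fun t => (y - t) ^ (α - 1) * h t) →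
      IntervalIntegrable (fun t => (y - t) ^ (α - 1) * h t) MeasureTheory.volume a y := by
    intro h hb hm
    apply hdom.mono_fun hm.aestronglyMeasurable
    filter_upwards [MeasureTheory.ae_restrict_mem measurableSet_uIoc] with t ht
    rcases Set.mem_uIoc.1 ht with ht | ht
    · have hty : t ≤ y := ht.2
      have hpow : (0:ℝ) ≤ (y - t) ^ (α - 1) := Real.rpow_nonneg (by linarith) _
      simp only [Real.norm_eq_abs, abs_mul, abs_of_nonneg hpow, abs_of_nonneg hC0]
      rw [mul_comm C]
      exact mul_le_mul_of_nonneg_left (hb t) hpow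
    · exact absurd ht.1 (by linarith [ht.2])
  have hI1 : IntervalIntegrable (fun t => (y - t) ^ (α - 1) * g' t) MeasureTheory.volume a y :=
    hbound g' hg'bound hmeas1
  have hI2 : IntervalIntegrable (fun t => (y - t) ^ (α - 1) * g' (t + x - y))
      MeasureTheory.volume a y :=
    hbound (fun t => g' (t + x - y)) (fun t => hg'bound _) hmeas2
  have hsub1 : Set.uIoc a c ⊆ Set.uIoc a y := by rw [Set.uIoc_of_le hac, Set.uIoc_of_le hay]; exact Set.Ioc_subset_Ioc le_rfl hcy
  have hsub2 : Set.uIoc c y ⊆ Set.uIoc a y := by rw [Set.uIoc_of_le hcy, Set.uIoc_of_le hay]; exact Set.Ioc_subset_Ioc hac le_rfl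
  have hI1ac := hI1.mono_set' hsub1
  have hI1cy := hI1.mono_set' hsub2
  have hI2cy := hI2.mono_set' hsub2
  -- Step A: Γ α * RL = plain integral
  have hΓ : Real.Gamma α ≠ 0 := ne_of_gt (Real.Gamma_pos_of_pos hα)
  have hRL : ∀ z : ℝ, Real.Gamma α * RL a α g z = ∫ t in a..z, (z - t) ^ (α - 1) * g t := by
    intro z
    simp only [RL]
    field_simp
  -- congruence to g'
  have hcong1 : (∫ t in a..y, (y - t) ^ (α - 1) * g t)
      = ∫ t in a..y, (y - t) ^ (α - 1) * g' t := by
    apply intervalIntegral.integral_congr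
    intro t ht
    dsimp only
    rw [Set.uIcc_of_le hay] at ht
    rw [hg'eq t ⟨ht.1, le_trans ht.2 hyb⟩]
  have hcong2 : (∫ t in a..x, (x - t) ^ (α - 1) * g t)
      = ∫ t in a..x, (x - t) ^ (α - 1) * g' t := by
    apply intervalIntegral.integral_congr
    intro t ht
    dsimp only
    rw [Set.uIcc_of_le hax] at ht
    rw [hg'eq t ⟨ht.1, le_trans ht.2 (le_trans hxy hyb)⟩]
  -- substitution
  have hshift : (∫ t in a..x, (x - t) ^ (α - 1) * g' t)
      = ∫ t in c..y, (y - t) ^ (α - 1) * g' (t + x - y) := by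
    have := intervalIntegral.integral_comp_sub_right
      (fun t => (x - t) ^ (α - 1) * g' t) (y - x) (a := c) (b := y)
    rw [show c - (y - x) = a by ring, show y - (y - x) = x by ring] at this
    rw [← this]
    apply intervalIntegral.integral_congr
    intro t _
    dsimp only
    have h1 : x - (t - (y - x)) = y - t := by ring
    have h2 : t - (y - x) = t + x - y := by ring
    rw [h1, h2]
  -- split
  have hsplit : (∫ t in a..y, (y - t) ^ (α - 1) * g' t)
      = (∫ t in a..c, (y - t) ^ (α - 1) * g' t) + ∫ t in c..y, (y - t) ^ (α - 1) * g' t :=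
    (intervalIntegral.integral_add_adjacent_intervals hI1ac hI1cy).symm
  -- combine differences
  have hdiff : (∫ t in c..y, (y - t) ^ (α - 1) * g' t)
      - (∫ t in c..y, (y - t) ^ (α - 1) * g' (t + x - y))
      = ∫ t in c..y, (y - t) ^ (α - 1) * (g' t - g' (t + x - y)) := by
    rw [← intervalIntegral.integral_sub hI1cy hI2cy]
    congr 1
    funext t
    ring
  -- back-congruence for the two target integrals
  have hcong3 : (∫ t in a..c, (y - t) ^ (α - 1) * g t)
      = ∫ t in a..c, (y - t) ^ (α - 1) * g' t := by
    apply intervalIntegral.integral_congr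
    intro t ht
    dsimp only
    rw [Set.uIcc_of_le hac] at ht
    rw [hg'eq t ⟨ht.1, le_trans ht.2 (le_trans hcy hyb)⟩]
  have hcong4 : (∫ t in c..y, (y - t) ^ (α - 1) * (g t - g (t + x - y)))
      = ∫ t in c..y, (y - t) ^ (α - 1) * (g' t - g' (t + x - y)) := by
    apply intervalIntegral.integral_congr
    intro t ht
    dsimp only
    rw [Set.uIcc_of_le hcy] at ht
    rw [hg'eq t ⟨le_trans hac ht.1, le_trans ht.2 hyb⟩,
      hg'eq (t + x - y) ⟨by simp only [hc] at ht ⊢; linarith [ht.1], by linarith [ht.2]⟩]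
  refine ⟨?_, ?_, ?_⟩
  · rw [mul_sub, hRL y, hRL x, hcong1, hcong2, hshift, hsplit, hcong3, hcong4]
    linarith [hdiff]
  · intro t ht
    have h1 : (0:ℝ) ≤ (y - t) ^ (α - 1) := Real.rpow_nonneg (by linarith [ht.2, hcy]) _
    have h2 : 0 ≤ g t := le_trans hga
      (hmono (Set.left_mem_Icc.2 hab) ⟨ht.1, by linarith [ht.2, hcy]⟩ ht.1)
    positivity
  · intro t ht
    have h1 : (0:ℝ) ≤ (y - t) ^ (α - 1) := Real.rpow_nonneg (by linarith [ht.2]) _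
    have h2 : g (t + x - y) ≤ g t := by
      apply hmono ⟨by simp only [hc] at ht; linarith [ht.1], by linarith [ht.2]⟩
        ⟨by simp only [hc] at ht; linarith [ht.1], by linarith [ht.2]⟩
      linarith
    have : 0 ≤ g t - g (t + x - y) := by linarith
    positivity
end

section
/- Let 0 < a < b < ∞, α > 0, and let f : [a,b] → ℝ be integrable. If x₀ ∈ [a,b] is a bounded variation point of f, then x₀ is a bounded variation point of the Riemann-Liouville fractional integral 𝔍ₐ^α f. -/
/-- `x₀` is a bounded variation point of `f` relative to `[a,b]`: there is a subinterval
`[c,d] ⊆ [a,b]` with `c < x₀ < d` (one-sided at the endpoints of `[a,b]`) on which `f`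
is of bounded variation. -/
def BVPoint (a b : ℝ) (f : ℝ → ℝ) (x₀ : ℝ) : Prop :=
  ∃ c d : ℝ, a ≤ c ∧ c ≤ x₀ ∧ x₀ ≤ d ∧ d ≤ b ∧ c < d ∧
    (c < x₀ ∨ c = a) ∧ (x₀ < d ∨ d = b) ∧
    BoundedVariationOn f (Set.Icc c d)

open Set MeasureTheory intervalIntegral

/-- product of interval integrable with bounded measurable is interval integrable -/
private lemma aux_bdd_mul {K g : ℝ → ℝ} {u v C : ℝ}
    (hK : IntervalIntegrable K volume u v) (hg : Measurable g)
    (hC : ∀ t ∈ Set.uIoc u v, |g t| ≤ C) :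
    IntervalIntegrable (fun t => K t * g t) volume u v := by
  rw [intervalIntegrable_iff] at hK ⊢
  have h1 : ∀ᵐ t ∂(volume.restrict (Set.uIoc u v)), ‖g t‖ ≤ C :=
    ae_restrict_of_forall_mem measurableSet_uIoc
      (fun t ht => by simpa [Real.norm_eq_abs] using hC t ht)
  have := hK.bdd_mul (c := C) hg.aestronglyMeasurable h1
  simpa [mul_comm, IntegrableOn] using this

private lemma mono_abs_bound {g : ℝ → ℝ} (hg : Monotone g) {u v : ℝ} (huv : u ≤ v) :
    ∀ t ∈ Set.uIoc u v, |g t| ≤ max |g u| |g v| := by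
  intro t ht
  rw [Set.uIoc_of_le huv] at ht
  refine abs_le.2 ⟨?_, ?_⟩
  · calc -(max |g u| |g v|) ≤ -|g u| := neg_le_neg (le_max_left _ _)
      _ ≤ g u := neg_abs_le _
      _ ≤ g t := hg ht.1.le
  · exact (hg ht.2).trans ((le_abs_self _).trans (le_max_right _ _))

private lemma kint {α : ℝ} (hα : 0 < α) (c x : ℝ) :
    IntervalIntegrable (fun t => (x - t) ^ (α - 1)) volume c x := by
  have h0 : IntervalIntegrable (fun s : ℝ => s ^ (α - 1)) volume 0 (x - c) :=
    intervalIntegrable_rpow' (by linarith)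
  have := (h0.comp_sub_left x).symm
  simpa using this

/-- substituted form: `s ↦ s^(α-1) * g (z - s)` integrable on `[0, w]` for monotone `g`. -/
private lemma subint {α : ℝ} (hα : 0 < α) {g : ℝ → ℝ} (hg : Monotone g) (z w : ℝ)
    (hw : 0 ≤ w) :
    IntervalIntegrable (fun s => s ^ (α - 1) * g (z - s)) volume 0 w := by
  have hm : Measurable fun s : ℝ => g (z - s) :=
    hg.measurable.comp (measurable_const.sub measurable_id)
  apply aux_bdd_mul (C := max |g (z - w)| |g z|) (intervalIntegrable_rpow' (by linarith)) hm
  intro t ht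
  rw [Set.uIoc_of_le hw] at ht
  refine abs_le.2 ⟨?_, ?_⟩
  · calc -(max |g (z - w)| |g z|) ≤ -|g (z - w)| := neg_le_neg (le_max_left _ _)
      _ ≤ g (z - w) := neg_abs_le _
      _ ≤ g (z - t) := hg (by linarith [ht.2])
  · exact (hg (by linarith [ht.1.le])).trans ((le_abs_self _).trans (le_max_right _ _))

/-- original form: `t ↦ (x-t)^(α-1) * g t` integrable on `[c, x]` for monotone `g`. -/
private lemma origint {α : ℝ} (hα : 0 < α) {g : ℝ → ℝ} (hg : Monotone g) (c x : ℝ)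
    (hcx : c ≤ x) :
    IntervalIntegrable (fun t => (x - t) ^ (α - 1) * g t) volume c x :=
  aux_bdd_mul (kint hα c x) hg.measurable (mono_abs_bound hg hcx)

private lemma subid (α : ℝ) (g : ℝ → ℝ) (c z : ℝ) :
    (∫ t in c..z, (z - t) ^ (α - 1) * g t)
      = ∫ s in (0:ℝ)..(z - c), s ^ (α - 1) * g (z - s) := by
  have := intervalIntegral.integral_comp_sub_left (a := c) (b := z)
    (fun u => u ^ (α - 1) * g (z - u)) z
  simp only [sub_sub_cancel, sub_self] at this
  rw [← this]

/-- the key monotonicity: for a monotone `g` with `0 ≤ g c`, the map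
`x ↦ ∫_c^x (x-t)^(α-1) g t dt` is monotone on `[c, ∞)`. -/
private lemma mono_main {α : ℝ} (hα : 0 < α) {g : ℝ → ℝ} (hg : Monotone g) {c : ℝ}
    (hgc : 0 ≤ g c) :
    MonotoneOn (fun x => ∫ t in c..x, (x - t) ^ (α - 1) * g t) (Set.Ici c) := by
  intro x hx y hy hxy
  simp only
  rw [subid, subid]
  have hx' : (0:ℝ) ≤ x - c := sub_nonneg.2 hx
  have hy' : (0:ℝ) ≤ y - c := sub_nonneg.2 hy
  have hxy' : x - c ≤ y - c := by linarith
  have h1 : (∫ s in (0:ℝ)..(x - c), s ^ (α - 1) * g (x - s))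
      ≤ ∫ s in (0:ℝ)..(x - c), s ^ (α - 1) * g (y - s) := by
    apply intervalIntegral.integral_mono_on hx'
      (subint hα hg x (x - c) hx') (subint hα hg y (x - c) hx')
    intro s hs
    exact mul_le_mul_of_nonneg_left (hg (by linarith)) (Real.rpow_nonneg hs.1 _)
  have hint2 : IntervalIntegrable (fun s => s ^ (α - 1) * g (y - s)) volume (x - c) (y - c) := by
    apply (subint hα hg y (y - c) hy').mono_set
    rw [Set.uIcc_of_le hxy', Set.uIcc_of_le hy']
    exact Set.Icc_subset_Icc hx' le_rfl
  have h2 : (∫ s in (0:ℝ)..(x - c), s ^ (α - 1) * g (y - s))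
      ≤ ∫ s in (0:ℝ)..(y - c), s ^ (α - 1) * g (y - s) := by
    rw [← intervalIntegral.integral_add_adjacent_intervals
      (subint hα hg y (x - c) hx') hint2]
    have h3 : 0 ≤ ∫ s in (x - c)..(y - c), s ^ (α - 1) * g (y - s) := by
      apply intervalIntegral.integral_nonneg hxy'
      intro s hs
      have h4 : 0 ≤ g (y - s) := hgc.trans (hg (by linarith [hs.2]))
      exact mul_nonneg (Real.rpow_nonneg (by linarith [hs.1]) _) h4
    linarith
  linarith

/-- tail integrand integrability -/
private lemma tail_int {α a c x : ℝ} {g : ℝ → ℝ} (hg : IntervalIntegrable g volume a c)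
    (hac : a ≤ c) (hcx : c < x) :
    IntervalIntegrable (fun t => (x - t) ^ (α - 1) * g t) volume a c := by
  apply hg.continuousOn_mul
  apply ContinuousOn.rpow_const (continuous_sub_left x).continuousOn
  intro t ht
  rw [Set.uIcc_of_le hac] at ht
  exact Or.inl (show x - t ≠ 0 from ne_of_gt (by linarith [ht.2]))

/-- tail monotonicity for nonnegative integrand, `α ≥ 1` -/
private lemma tail_mono_ge {α a c c' : ℝ} (h1 : 1 ≤ α) {g : ℝ → ℝ} (hg : ∀ t, 0 ≤ g t)
    (hgint : IntervalIntegrable g volume a c) (hac : a ≤ c) (hcc' : c < c') :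
    MonotoneOn (fun x => ∫ t in a..c, (x - t) ^ (α - 1) * g t) (Set.Ici c') := by
  intro x hx y hy hxy
  simp only
  apply intervalIntegral.integral_mono_on hac
    (tail_int hgint hac (lt_of_lt_of_le hcc' hx)) (tail_int hgint hac (lt_of_lt_of_le hcc' hy))
  intro t ht
  have h2 : (0:ℝ) ≤ x - t := by linarith [ht.2, hx.out]
  exact mul_le_mul_of_nonneg_right (Real.rpow_le_rpow h2 (by linarith) (by linarith)) (hg t)

/-- tail antitonicity for nonnegative integrand, `α ≤ 1` -/
private lemma tail_mono_le {α a c c' : ℝ} (h0 : 0 < α) (h1 : α ≤ 1) {g : ℝ → ℝ}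
    (hg : ∀ t, 0 ≤ g t)
    (hgint : IntervalIntegrable g volume a c) (hac : a ≤ c) (hcc' : c < c') :
    AntitoneOn (fun x => ∫ t in a..c, (x - t) ^ (α - 1) * g t) (Set.Ici c') := by
  intro x hx y hy hxy
  simp only
  apply intervalIntegral.integral_mono_on hac
    (tail_int hgint hac (lt_of_lt_of_le hcc' hy)) (tail_int hgint hac (lt_of_lt_of_le hcc' hx))
  intro t ht
  have h2 : (0:ℝ) < x - t := by linarith [ht.2, hx.out]
  exact mul_le_mul_of_nonneg_right
    (Real.rpow_le_rpow_of_nonpos h2 (by linarith) (by linarith)) (hg t)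

/-- decomposition of the tail `x ↦ ∫_a^c (x-t)^(α-1) f t dt` as a difference of monotone
functions on `[c', d]`, together with integrability of the integrand. -/
private lemma tail_decomp {α a c c' d : ℝ} (hα : 0 < α) {f : ℝ → ℝ}
    (hint : IntervalIntegrable f volume a c) (hac : a ≤ c)
    (hcase : c < c' ∨ c = a) (hc'd : c' ≤ d) :
    ∃ u v : ℝ → ℝ, MonotoneOn u (Set.Icc c' d) ∧ MonotoneOn v (Set.Icc c' d) ∧
      ∀ x ∈ Set.Icc c' d,
        IntervalIntegrable (fun t => (x - t) ^ (α - 1) * f t) volume a c ∧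
        (∫ t in a..c, (x - t) ^ (α - 1) * f t) = u x - v x := by
  rcases hcase with hcc' | rfl
  · -- genuine tail
    set F₁ : ℝ → ℝ := fun t => max (f t) 0 with hF₁
    set F₂ : ℝ → ℝ := fun t => max (-f t) 0 with hF₂
    have hF₁int : IntervalIntegrable F₁ volume a c := by
      rw [intervalIntegrable_iff] at hint ⊢; exact hint.pos_part
    have hF₂int : IntervalIntegrable F₂ volume a c := by
      rw [intervalIntegrable_iff] at hint ⊢; exact hint.neg.pos_part
    have hF₁0 : ∀ t, 0 ≤ F₁ t := fun t => le_max_right _ _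
    have hF₂0 : ∀ t, 0 ≤ F₂ t := fun t => le_max_right _ _
    have hsplit : ∀ x ∈ Set.Icc c' d,
        (∫ t in a..c, (x - t) ^ (α - 1) * f t)
          = (∫ t in a..c, (x - t) ^ (α - 1) * F₁ t)
            - ∫ t in a..c, (x - t) ^ (α - 1) * F₂ t := by
      intro x hx
      rw [← intervalIntegral.integral_sub (tail_int hF₁int hac (lt_of_lt_of_le hcc' hx.1))
        (tail_int hF₂int hac (lt_of_lt_of_le hcc' hx.1))]
      apply intervalIntegral.integral_congr
      intro t _
      have : F₁ t - F₂ t = f t := max_zero_sub_eq_self (f t)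
      simp only [hF₁, hF₂]
      rw [← mul_sub, this]
    rcases le_total 1 α with h1 | h1
    · refine ⟨_, _,
        ((tail_mono_ge h1 hF₁0 hF₁int hac hcc').mono Set.Icc_subset_Ici_self),
        ((tail_mono_ge h1 hF₂0 hF₂int hac hcc').mono Set.Icc_subset_Ici_self),
        fun x hx => ⟨tail_int hint hac (lt_of_lt_of_le hcc' hx.1), hsplit x hx⟩⟩
    · have hA₁ := tail_mono_le hα h1 hF₁0 hF₁int hac hcc'
      have hA₂ := tail_mono_le hα h1 hF₂0 hF₂int hac hcc'
      refine ⟨fun x => -(∫ t in a..c, (x - t) ^ (α - 1) * F₂ t),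
        fun x => -(∫ t in a..c, (x - t) ^ (α - 1) * F₁ t), ?_, ?_, ?_⟩
      · intro x hx y hy hxy
        exact neg_le_neg (hA₂ hx.1 hy.1 hxy)
      · intro x hx y hy hxy
        exact neg_le_neg (hA₁ hx.1 hy.1 hxy)
      · intro x hx
        refine ⟨tail_int hint hac (lt_of_lt_of_le hcc' hx.1), ?_⟩
        rw [hsplit x hx]; ring
  · -- c = a : tail is zero
    refine ⟨0, 0, monotoneOn_const, monotoneOn_const, fun x hx => ⟨?_, by simp⟩⟩
    rw [intervalIntegrable_iff]
    simp

/-- decomposition of the main part `x ↦ ∫_c^x (x-t)^(α-1) f t dt` as a difference of monotone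
functions on `[c, d]`, together with integrability of the integrand. -/
private lemma main_decomp {α c d : ℝ} (hα : 0 < α) {f : ℝ → ℝ}
    (hbv : BoundedVariationOn f (Set.Icc c d)) (hcd : c ≤ d) :
    ∃ u v : ℝ → ℝ, MonotoneOn u (Set.Icc c d) ∧ MonotoneOn v (Set.Icc c d) ∧
      ∀ x ∈ Set.Icc c d,
        IntervalIntegrable (fun t => (x - t) ^ (α - 1) * f t) volume c x ∧
        (∫ t in c..x, (x - t) ^ (α - 1) * f t) = u x - v x := by
  obtain ⟨p, q, hp, hq, hpq⟩ :=
    hbv.locallyBoundedVariationOn.exists_monotoneOn_sub_monotoneOn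
  set π : ℝ → ℝ := fun t => max c (min t d) with hπdef
  have hπmem : ∀ t, π t ∈ Set.Icc c d := fun t =>
    ⟨le_max_left _ _, max_le hcd (min_le_right _ _)⟩
  have hπmono : Monotone π := fun s t hst =>
    max_le_max le_rfl (min_le_min (by exact hst) le_rfl)
  have hπid : ∀ t ∈ Set.Icc c d, π t = t := by
    intro t ht
    simp only [hπdef]
    rw [min_eq_left ht.2, max_eq_right ht.1]
  have hπc : π c = c := hπid c ⟨le_rfl, hcd⟩
  set P : ℝ → ℝ := fun t => p (π t) - p c with hP
  set Q : ℝ → ℝ := fun t => q (π t) - q c with hQ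
  have hPmono : Monotone P := fun s t hst =>
    sub_le_sub_right (hp (hπmem s) (hπmem t) (hπmono hst)) _
  have hQmono : Monotone Q := fun s t hst =>
    sub_le_sub_right (hq (hπmem s) (hπmem t) (hπmono hst)) _
  have hPc : P c = 0 := by simp [hP, hπc]
  have hQc : Q c = 0 := by simp [hQ, hπc]
  set r : ℝ := p c - q c with hr
  set One : ℝ → ℝ := fun _ => (1:ℝ) with hOne
  have hOnemono : Monotone One := monotone_const
  have hfPQ : ∀ t ∈ Set.Icc c d, f t = P t - Q t + r := by
    intro t ht
    have := congrFun hpq t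
    simp only [Pi.sub_apply] at this
    simp [hP, hQ, hπid t ht, this, hr]
    ring
  have key : ∀ x ∈ Set.Icc c d,
      IntervalIntegrable (fun t => (x - t) ^ (α - 1) * f t) volume c x ∧
      (∫ t in c..x, (x - t) ^ (α - 1) * f t)
        = ((∫ t in c..x, (x - t) ^ (α - 1) * P t)
            + max r 0 * ∫ t in c..x, (x - t) ^ (α - 1) * One t)
          - ((∫ t in c..x, (x - t) ^ (α - 1) * Q t)
            + max (-r) 0 * ∫ t in c..x, (x - t) ^ (α - 1) * One t) := by
    intro x hx
    have hcx : c ≤ x := hx.1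
    have heq : Set.EqOn (fun t => (x - t) ^ (α - 1) * f t)
        (fun t => (x - t) ^ (α - 1) * P t - (x - t) ^ (α - 1) * Q t
          + r * ((x - t) ^ (α - 1) * One t)) (Set.uIcc c x) := by
      intro t ht
      rw [Set.uIcc_of_le hcx] at ht
      have ht' : t ∈ Set.Icc c d := ⟨ht.1, ht.2.trans hx.2⟩
      simp only [hOne, mul_one]
      rw [hfPQ t ht']
      ring
    have hiP := origint hα hPmono c x hcx
    have hiQ := origint hα hQmono c x hcx
    have hiOne := origint hα hOnemono c x hcx
    have hiRHS : IntervalIntegrable (fun t => (x - t) ^ (α - 1) * P t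
        - (x - t) ^ (α - 1) * Q t + r * ((x - t) ^ (α - 1) * One t)) volume c x :=
      (hiP.sub hiQ).add (hiOne.const_mul r)
    constructor
    · rw [intervalIntegrable_iff] at hiRHS ⊢
      apply hiRHS.congr
      apply ae_restrict_of_forall_mem measurableSet_uIoc
      intro t ht
      exact (heq (Set.uIoc_subset_uIcc ht)).symm
    · rw [intervalIntegral.integral_congr heq,
        intervalIntegral.integral_add (hiP.sub hiQ) (hiOne.const_mul r),
        intervalIntegral.integral_sub hiP hiQ,
        intervalIntegral.integral_const_mul]
      have hrr : max r 0 = r + max (-r) 0 := by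
        have := max_zero_sub_eq_self r
        linarith
      rw [hrr]
      ring
  have hKmono : MonotoneOn (fun x => ∫ t in c..x, (x - t) ^ (α - 1) * One t) (Set.Ici c) :=
    mono_main hα hOnemono (by norm_num [hOne])
  have hPmonoI : MonotoneOn (fun x => ∫ t in c..x, (x - t) ^ (α - 1) * P t) (Set.Ici c) :=
    mono_main hα hPmono (le_of_eq hPc.symm)
  have hQmonoI : MonotoneOn (fun x => ∫ t in c..x, (x - t) ^ (α - 1) * Q t) (Set.Ici c) :=
    mono_main hα hQmono (le_of_eq hQc.symm)
  refine ⟨_, _, ?_, ?_, fun x hx => (key x hx)⟩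
  · intro x hx y hy hxy
    exact add_le_add (hPmonoI hx.1 hy.1 hxy)
      (mul_le_mul_of_nonneg_left (hKmono hx.1 hy.1 hxy) (le_max_right _ _))
  · intro x hx y hy hxy
    exact add_le_add (hQmonoI hx.1 hy.1 hxy)
      (mul_le_mul_of_nonneg_left (hKmono hx.1 hy.1 hxy) (le_max_right _ _))

/-- a function which agrees on `[c,d]` with a difference of monotone functions has
bounded variation there -/
private lemma bv_of_sub {f u v : ℝ → ℝ} {c d : ℝ} (hcd : c ≤ d)
    (hu : MonotoneOn u (Set.Icc c d)) (hv : MonotoneOn v (Set.Icc c d))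
    (hf : ∀ x ∈ Set.Icc c d, f x = u x - v x) :
    BoundedVariationOn f (Set.Icc c d) := by
  have hcm : c ∈ Set.Icc c d := ⟨le_rfl, hcd⟩
  have hdm : d ∈ Set.Icc c d := ⟨hcd, le_rfl⟩
  have hbound : eVariationOn f (Set.Icc c d)
      ≤ ENNReal.ofReal (u d - u c) + ENNReal.ofReal (v d - v c) := by
    apply iSup_le
    rintro ⟨n, ⟨w, hw, ws⟩⟩
    have step : ∀ i, i ∈ Finset.range n →
        edist (f (w (i + 1))) (f (w i))
          ≤ ENNReal.ofReal (u (w (i + 1)) - u (w i))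
            + ENNReal.ofReal (v (w (i + 1)) - v (w i)) := by
      intro i _
      have h1 : u (w i) ≤ u (w (i + 1)) := hu (ws i) (ws (i + 1)) (hw (Nat.le_succ _))
      have h2 : v (w i) ≤ v (w (i + 1)) := hv (ws i) (ws (i + 1)) (hw (Nat.le_succ _))
      rw [hf _ (ws (i + 1)), hf _ (ws i), edist_dist, Real.dist_eq,
        ← ENNReal.ofReal_add (by linarith) (by linarith)]
      apply ENNReal.ofReal_le_ofReal
      rw [abs_le]
      constructor <;> [linarith; linarith]
    calc (∑ i ∈ Finset.range n, edist (f (w (i + 1))) (f (w i)))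
        ≤ ∑ i ∈ Finset.range n, (ENNReal.ofReal (u (w (i + 1)) - u (w i))
            + ENNReal.ofReal (v (w (i + 1)) - v (w i))) := Finset.sum_le_sum step
      _ = (∑ i ∈ Finset.range n, ENNReal.ofReal (u (w (i + 1)) - u (w i)))
          + ∑ i ∈ Finset.range n, ENNReal.ofReal (v (w (i + 1)) - v (w i)) :=
        Finset.sum_add_distrib
      _ ≤ ENNReal.ofReal (u d - u c) + ENNReal.ofReal (v d - v c) := by
        gcongr <;>
        · rw [← ENNReal.ofReal_sum_of_nonneg (fun i _ => by
            have h1 := hu (ws i) (ws (i + 1)) (hw (Nat.le_succ i))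
            have h2 := hv (ws i) (ws (i + 1)) (hw (Nat.le_succ i))
            linarith)]
          first
          | (rw [Finset.sum_range_sub (fun i => u (w i))]
             exact ENNReal.ofReal_le_ofReal (sub_le_sub
               (hu (ws n) hdm (ws n).2) (hu hcm (ws 0) (ws 0).1)))
          | (rw [Finset.sum_range_sub (fun i => v (w i))]
             exact ENNReal.ofReal_le_ofReal (sub_le_sub
               (hv (ws n) hdm (ws n).2) (hv hcm (ws 0) (ws 0).1)))
      _ = ENNReal.ofReal (u d - u c) + ENNReal.ofReal (v d - v c) := rfl
  exact (hbound.trans_lt (ENNReal.add_lt_top.2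
    ⟨ENNReal.ofReal_lt_top, ENNReal.ofReal_lt_top⟩)).ne

theorem stmt_5 (a b α : ℝ) (ha : 0 < a) (hab : a < b) (hα : 0 < α) (f : ℝ → ℝ)
    (hint : IntervalIntegrable f MeasureTheory.volume a b)
    (x₀ : ℝ) (hx₀ : x₀ ∈ Set.Icc a b) (h : BVPoint a b f x₀) :
    BVPoint a b (RL a α f) x₀ := by
  obtain ⟨c, d, hac, hcx, hxd, hdb, hcd, hcx', hxd', hbv⟩ := h
  have hdb' : c ≤ b := hcd.le.trans hdb
  obtain ⟨c', hcc', hc'x, hcase, hc'case, hc'd⟩ :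
      ∃ c', c ≤ c' ∧ c' ≤ x₀ ∧ (c < c' ∨ c = a) ∧ (c' < x₀ ∨ c' = a) ∧ c' < d := by
    rcases hcx' with hlt | rfl
    · exact ⟨(c + x₀) / 2, by linarith, by linarith, Or.inl (by linarith),
        Or.inl (by linarith), by linarith⟩
    · exact ⟨c, le_rfl, hcx, Or.inr rfl, Or.inr rfl, hcd⟩
  have hintac : IntervalIntegrable f volume a c := by
    apply hint.mono_set
    rw [Set.uIcc_of_le hac, Set.uIcc_of_le hab.le]
    exact Set.Icc_subset_Icc le_rfl hdb'
  obtain ⟨u₁, v₁, hu₁, hv₁, h₁⟩ := tail_decomp hα hintac hac hcase hc'd.le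
  obtain ⟨u₂, v₂, hu₂, hv₂, h₂⟩ := main_decomp hα hbv hcd.le
  have hsub : Set.Icc c' d ⊆ Set.Icc c d := Set.Icc_subset_Icc hcc' le_rfl
  have hγ : 0 ≤ 1 / Real.Gamma α := by
    positivity
  refine ⟨c', d, hac.trans hcc', hc'x, hxd, hdb, hc'd, hc'case, hxd', ?_⟩
  apply bv_of_sub (hc'd.le)
    (u := fun x => (1 / Real.Gamma α) * (u₁ x + u₂ x))
    (v := fun x => (1 / Real.Gamma α) * (v₁ x + v₂ x))
  · intro x hx y hy hxy
    exact mul_le_mul_of_nonneg_left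
      (add_le_add (hu₁ hx hy hxy) (hu₂ (hsub hx) (hsub hy) hxy)) hγ
  · intro x hx y hy hxy
    exact mul_le_mul_of_nonneg_left
      (add_le_add (hv₁ hx hy hxy) (hv₂ (hsub hx) (hsub hy) hxy)) hγ
  · intro x hx
    obtain ⟨hi₁, he₁⟩ := h₁ x hx
    obtain ⟨hi₂, he₂⟩ := h₂ x (hsub hx)
    have hsplitax : (∫ t in a..x, (x - t) ^ (α - 1) * f t)
        = (∫ t in a..c, (x - t) ^ (α - 1) * f t)
          + ∫ t in c..x, (x - t) ^ (α - 1) * f t :=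
      (intervalIntegral.integral_add_adjacent_intervals hi₁ hi₂).symm
    simp only [RL]
    rw [hsplitax, he₁, he₂]
    ring
end

section
/- Let 0 < a < b < ∞ and α > 0. The Riemann-Liouville fractional integral operator 𝔍ₐ^α maps BV([a,b]) ∩ C([a,b]) into BV([a,b]) and is a bounded linear operator; explicitly, ‖𝔍ₐ^α f‖_{BV} ≤ 2 max{ V(g,[a,b])/Γ(α+1), (b-a)^α/Γ(α+1) } · ‖f‖_{BV}, where g(x) = (x-a)^α. -/
open Set MeasureTheory intervalIntegral

/-- The BV norm `‖f‖_BV = |f a| + V(f,[a,b])`. -/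
noncomputable def bvNorm (a b : ℝ) (f : ℝ → ℝ) : ℝ :=
  |f a| + (eVariationOn f (Set.Icc a b)).toReal

lemma evar_add_le (f g : ℝ → ℝ) (s : Set ℝ) :
    eVariationOn (fun x => f x + g x) s ≤ eVariationOn f s + eVariationOn g s := by
  apply iSup_le
  rintro ⟨n, ⟨u, hu, us⟩⟩
  calc ∑ i ∈ Finset.range n, edist ((fun x => f x + g x) (u (i+1))) ((fun x => f x + g x) (u i))
      ≤ ∑ i ∈ Finset.range n,
          (edist (f (u (i+1))) (f (u i)) + edist (g (u (i+1))) (g (u i))) := by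
        refine Finset.sum_le_sum fun i _ => ?_
        simp only [edist_dist, Real.dist_eq]
        rw [← ENNReal.ofReal_add (abs_nonneg _) (abs_nonneg _)]
        apply ENNReal.ofReal_le_ofReal
        have h : (f (u (i+1)) + g (u (i+1))) - (f (u i) + g (u i))
            = (f (u (i+1)) - f (u i)) + (g (u (i+1)) - g (u i)) := by ring
        rw [h]; exact abs_add_le _ _
    _ = _ + _ := Finset.sum_add_distrib
    _ ≤ _ := add_le_add (eVariationOn.sum_le (f := f) (n := n) hu us) (eVariationOn.sum_le (f := g) (n := n) hu us)

lemma evar_const_mul (c : ℝ) (f : ℝ → ℝ) (s : Set ℝ) :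
    eVariationOn (fun x => c * f x) s ≤ ENNReal.ofReal |c| * eVariationOn f s := by
  have hl : LipschitzWith ⟨|c|, abs_nonneg c⟩ (fun y : ℝ => c * y) := by
    apply LipschitzWith.of_dist_le_mul
    intro x y
    simp [Real.dist_eq, ← mul_sub, abs_mul]
    exact le_rfl
  have := (hl.lipschitzOnWith (s := Set.univ)).comp_eVariationOn_le (mapsTo_univ f s)
  refine le_trans this (le_of_eq ?_)
  congr 1
  simp [ENNReal.ofReal_eq_coe_nnreal (abs_nonneg c)]
  rfl

lemma evar_neg_eq (f : ℝ → ℝ) (s : Set ℝ) :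
    eVariationOn (fun x => -f x) s = eVariationOn f s := by
  dsimp only [eVariationOn]
  congr 1 with p : 1
  congr 1 with i : 1
  rw [edist_neg_neg]

lemma ker_int {α : ℝ} (hα : 0 < α) (u v : ℝ) :
    IntervalIntegrable (fun s : ℝ => s ^ (α - 1)) volume u v :=
  intervalIntegrable_rpow' (by linarith)

lemma ker_integral {α : ℝ} (hα : 0 < α) (c : ℝ) :
    ∫ s in (0:ℝ)..c, s ^ (α - 1) = c ^ α / α := by
  rw [integral_rpow (Or.inl (by linarith))]
  rw [sub_add_cancel, Real.zero_rpow hα.ne', sub_zero]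

lemma bdd_mul_int {h k : ℝ → ℝ} (hm : Measurable h) {C : ℝ} (hb : ∀ x, |h x| ≤ C)
    {u v : ℝ} (hk : IntervalIntegrable k volume u v) :
    IntervalIntegrable (fun s => h s * k s) volume u v := by
  rw [intervalIntegrable_iff] at hk ⊢
  exact hk.bdd_mul hm.aestronglyMeasurable (c := C) (Filter.Eventually.of_forall fun x => by simpa [Real.norm_eq_abs] using hb x)

/-- The "substituted" fractional integral of the increment of `h`. -/
noncomputable def Jaux (a α : ℝ) (h : ℝ → ℝ) (x : ℝ) : ℝ :=
  ∫ s in (0:ℝ)..(x - a), (h (x - s) - h a) * s ^ (α - 1)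

lemma Jaux_int {a α : ℝ} (hα : 0 < α) {h : ℝ → ℝ} (hm : Measurable h) {C : ℝ}
    (hb : ∀ x, |h x| ≤ C) (x u v : ℝ) :
    IntervalIntegrable (fun s => (h (x - s) - h a) * s ^ (α - 1)) volume u v := by
  refine bdd_mul_int ((hm.comp (measurable_const.sub measurable_id)).sub measurable_const)
    (C := C + C) (fun y => ?_) (ker_int hα u v)
  calc |h (x - y) - h a| ≤ |h (x - y)| + |h a| := abs_sub _ _
    _ ≤ C + C := add_le_add (hb _) (hb _)

lemma Jaux_self {a α : ℝ} (h : ℝ → ℝ) : Jaux a α h a = 0 := by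
  simp [Jaux]

lemma Jaux_mono {a b α : ℝ} (hab : a < b) (hα : 0 < α) {h : ℝ → ℝ} (hm : Measurable h)
    {C : ℝ} (hb : ∀ x, |h x| ≤ C) (hmono : MonotoneOn h (Set.Icc a b)) :
    MonotoneOn (Jaux a α h) (Set.Icc a b) := by
  have hint := Jaux_int (a := a) hα hm hb
  intro x₁ hx₁ x₂ hx₂ h12
  have h1a : 0 ≤ x₁ - a := by linarith [hx₁.1]
  have key : Jaux a α h x₂ - Jaux a α h x₁ =
      (∫ s in (0:ℝ)..(x₁ - a),
        ((h (x₂ - s) - h a) * s ^ (α-1) - (h (x₁ - s) - h a) * s ^ (α-1))) +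
      ∫ s in (x₁ - a)..(x₂ - a), (h (x₂ - s) - h a) * s ^ (α-1) := by
    rw [integral_sub (hint x₂ 0 (x₁-a)) (hint x₁ 0 (x₁-a))]
    have hsplit := integral_add_adjacent_intervals (hint x₂ 0 (x₁-a)) (hint x₂ (x₁-a) (x₂-a))
    simp only [Jaux]
    rw [← hsplit]; ring
  have h1 : 0 ≤ ∫ s in (0:ℝ)..(x₁ - a),
      ((h (x₂ - s) - h a) * s ^ (α-1) - (h (x₁ - s) - h a) * s ^ (α-1)) := by
    apply integral_nonneg h1a
    intro s hs
    have hker : (0:ℝ) ≤ s ^ (α-1) := Real.rpow_nonneg hs.1 _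
    have harg1 : x₁ - s ∈ Set.Icc a b := ⟨by linarith [hs.2], by linarith [hx₁.2, hs.1]⟩
    have harg2 : x₂ - s ∈ Set.Icc a b := ⟨by linarith [hs.2], by linarith [hx₂.2, hs.1]⟩
    have hm2 := hmono harg1 harg2 (by linarith)
    nlinarith
  have h2 : 0 ≤ ∫ s in (x₁-a)..(x₂-a), (h (x₂ - s) - h a) * s ^ (α-1) := by
    apply integral_nonneg (by linarith)
    intro s hs
    have hs0 : 0 ≤ s := le_trans h1a hs.1
    have hker : (0:ℝ) ≤ s ^ (α-1) := Real.rpow_nonneg hs0 _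
    have harg : x₂ - s ∈ Set.Icc a b := ⟨by linarith [hs.2], by linarith [hx₂.2]⟩
    have hm2 := hmono ⟨le_refl a, hab.le⟩ harg (by linarith [hs.2])
    nlinarith
  linarith

lemma Jaux_bound {a b α : ℝ} (hab : a < b) (hα : 0 < α) {h : ℝ → ℝ} (hm : Measurable h)
    {C : ℝ} (hb : ∀ x, |h x| ≤ C) (hmono : MonotoneOn h (Set.Icc a b)) :
    Jaux a α h b ≤ (h b - h a) * ((b - a) ^ α / α) := by
  have hint := Jaux_int (a := a) hα hm hb
  have hle : Jaux a α h b ≤ ∫ s in (0:ℝ)..(b-a), (h b - h a) * s ^ (α-1) := by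
    apply integral_mono_on (by linarith) (hint b 0 (b-a)) ((ker_int hα 0 (b-a)).const_mul _)
    intro s hs
    have hker := Real.rpow_nonneg hs.1 (α-1)
    have harg : b - s ∈ Set.Icc a b := ⟨by linarith [hs.2], by linarith [hs.1]⟩
    have hm2 := hmono harg ⟨hab.le, le_refl b⟩ (by linarith [hs.1])
    nlinarith
  rwa [intervalIntegral.integral_const_mul, ker_integral hα] at hle

lemma main_aux (a b α : ℝ) (hab : a < b) (hα : 0 < α) (f : ℝ → ℝ)
    (hf : BoundedVariationOn f (Set.Icc a b)) (hfc : ContinuousOn f (Set.Icc a b)) :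
    eVariationOn (RL a α f) (Set.Icc a b) ≤ ENNReal.ofReal
      ((eVariationOn (fun x => (x - a) ^ α) (Set.Icc a b)).toReal / Real.Gamma (α + 1) * |f a| +
       (b - a) ^ α / Real.Gamma (α + 1) * (eVariationOn f (Set.Icc a b)).toReal) := by
  have haI : a ∈ Set.Icc a b := ⟨le_refl a, hab.le⟩
  have hbI : b ∈ Set.Icc a b := ⟨hab.le, le_refl b⟩
  have hΓ : 0 < Real.Gamma α := Real.Gamma_pos_of_pos hα
  have hΓ' : 0 < Real.Gamma (α + 1) := Real.Gamma_pos_of_pos (by linarith)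
  have hΓeq : Real.Gamma (α + 1) = α * Real.Gamma α := Real.Gamma_add_one hα.ne'
  -- continuous bounded extension F of f
  set F : ℝ → ℝ := fun x => f (Set.projIcc a b hab.le x) with hFdef
  have hFf : Set.EqOn F f (Set.Icc a b) := fun x hx => by
    simp [hFdef, Set.projIcc_of_mem hab.le hx]
  have hFc : Continuous F :=
    hfc.comp_continuous (continuous_subtype_val.comp continuous_projIcc)
      (fun x => (Set.projIcc a b hab.le x).2)
  have hFm : Measurable F := hFc.measurable
  have hFvar : eVariationOn F (Set.Icc a b) = eVariationOn f (Set.Icc a b) :=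
    eVariationOn.eq_of_eqOn hFf
  have hVfin : eVariationOn F (Set.Icc a b) ≠ ⊤ := by rw [hFvar]; exact hf
  have hFlbv : LocallyBoundedVariationOn F (Set.Icc a b) :=
    BoundedVariationOn.locallyBoundedVariationOn hVfin
  set tV : ℝ := (eVariationOn f (Set.Icc a b)).toReal with htVdef
  obtain ⟨Cf, hCf⟩ := IsCompact.exists_bound_of_continuousOn isCompact_Icc hfc
  have hFbd : ∀ x, |F x| ≤ Cf := fun x => by
    simpa [Real.norm_eq_abs] using hCf _ (Set.projIcc a b hab.le x).2
  -- the variation function v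
  set v : ℝ → ℝ := fun x => variationOnFromTo F (Set.Icc a b) a x with hvdef
  have hv : ∀ x, v x = (eVariationOn F (Set.Icc a b ∩ Set.Icc a x)).toReal := by
    intro x
    by_cases hx : a ≤ x
    · exact variationOnFromTo.eq_of_le _ _ hx
    · push_neg at hx
      have h1 : eVariationOn F (Set.Icc a b ∩ Set.Icc x a) = 0 := by
        apply eVariationOn.subsingleton
        intro p hp q hq
        have hpa : p = a := le_antisymm hp.2.2 hp.1.1
        have hqa : q = a := le_antisymm hq.2.2 hq.1.1
        rw [hpa, hqa]
      have h2 : eVariationOn F (Set.Icc a b ∩ Set.Icc a x) = 0 := by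
        rw [Set.Icc_eq_empty (not_le.mpr hx), Set.inter_empty]
        exact eVariationOn.subsingleton _ subsingleton_empty
      simp only [hvdef, variationOnFromTo, if_neg (not_le.mpr hx), h1, h2]
      simp
  have hvfin : ∀ x, eVariationOn F (Set.Icc a b ∩ Set.Icc a x) ≠ ⊤ :=
    fun x => ne_top_of_le_ne_top hVfin (eVariationOn.mono F Set.inter_subset_left)
  have hvmono : Monotone v := by
    intro x y hxy
    rw [hv x, hv y]
    exact ENNReal.toReal_mono (hvfin y)
      (eVariationOn.mono F (Set.inter_subset_inter_right _ (Set.Icc_subset_Icc_right hxy)))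
  have hvmeas : Measurable v := hvmono.measurable
  have hvbd : ∀ x, |v x| ≤ tV := by
    intro x
    rw [hv x, abs_of_nonneg ENNReal.toReal_nonneg, htVdef, ← hFvar]
    exact ENNReal.toReal_mono hVfin (eVariationOn.mono F Set.inter_subset_left)
  have hva : v a = 0 := variationOnFromTo.self _ _ _
  have hvb : v b = tV := by
    rw [hv b, Set.inter_self, hFvar]
  -- Jordan decomposition p - q = F
  set p : ℝ → ℝ := fun x => (v x + F x) / 2 with hpdef
  set q : ℝ → ℝ := fun x => (v x - F x) / 2 with hqdef
  have hpq : ∀ y, p y - q y = F y := fun y => by simp [hpdef, hqdef]; ring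
  have hpm : Measurable p := (hvmeas.add hFm).div_const 2
  have hqm : Measurable q := (hvmeas.sub hFm).div_const 2
  set C0 : ℝ := (tV + Cf) / 2 with hC0def
  have hpbd : ∀ x, |p x| ≤ C0 := by
    intro x
    have h1 := hvbd x; have h2 := hFbd x
    rw [hpdef]; simp only
    rw [abs_div]
    have := abs_add_le (v x) (F x)
    simp only [abs_two]
    rw [hC0def]
    have : |v x + F x| ≤ tV + Cf := le_trans (abs_add_le _ _) (add_le_add h1 h2)
    linarith [abs_nonneg (v x + F x)]
  have hqbd : ∀ x, |q x| ≤ C0 := by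
    intro x
    have h1 := hvbd x; have h2 := hFbd x
    rw [hqdef]; simp only
    rw [abs_div, abs_two, hC0def]
    have : |v x - F x| ≤ tV + Cf := le_trans (abs_sub _ _) (add_le_add h1 h2)
    linarith
  -- monotonicity of p and q on Icc a b
  have hqmono : MonotoneOn q (Set.Icc a b) := by
    have := variationOnFromTo.sub_self_monotoneOn hFlbv haI
    intro x hx y hy hxy
    have h2 := this hx hy hxy
    simp only [Pi.sub_apply] at h2
    simp only [hqdef]
    linarith
  have hpmono : MonotoneOn p (Set.Icc a b) := by
    have hnegbv : LocallyBoundedVariationOn (fun y => -F y) (Set.Icc a b) := by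
      apply BoundedVariationOn.locallyBoundedVariationOn
      unfold BoundedVariationOn
      rw [evar_neg_eq]
      exact hVfin
    have hmono := variationOnFromTo.sub_self_monotoneOn hnegbv haI
    have hw : ∀ x, variationOnFromTo (fun y => -F y) (Set.Icc a b) a x = v x := by
      intro x
      simp only [hvdef, variationOnFromTo, evar_neg_eq]
    intro x hx y hy hxy
    have h2 := hmono hx hy hxy
    simp only [Pi.sub_apply, hw] at h2
    simp only [hpdef]
    linarith
  -- the key identity on Icc a b
  have hid : ∀ x ∈ Set.Icc a b,
      RL a α f x = (1 / Real.Gamma α) * (f a * ((x - a) ^ α / α) + Jaux a α p x - Jaux a α q x) := by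
    intro x hx
    have hax : a ≤ x := hx.1
    have step1 : (∫ t in a..x, (x - t) ^ (α-1) * f t)
        = ∫ t in a..x, (fun s => F (x - s) * s ^ (α-1)) (x - t) := by
      apply integral_congr
      intro t ht
      rw [Set.uIcc_of_le hax] at ht
      have htI : t ∈ Set.Icc a b := ⟨ht.1, le_trans ht.2 hx.2⟩
      simp only [sub_sub_cancel]
      rw [hFf htI]
      exact mul_comm _ _
    have step2 : (∫ t in a..x, (fun s => F (x - s) * s ^ (α-1)) (x - t))
        = ∫ s in (0:ℝ)..(x - a), F (x - s) * s ^ (α-1) := by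
      rw [integral_comp_sub_left (fun s => F (x - s) * s ^ (α-1)) x, sub_self]
    have step3 : (∫ s in (0:ℝ)..(x - a), F (x - s) * s ^ (α-1))
        = f a * ((x - a) ^ α / α) + Jaux a α p x - Jaux a α q x := by
      have e : ∀ s : ℝ, F (x - s) * s ^ (α-1)
          = F a * s ^ (α-1) + ((p (x - s) - p a) * s ^ (α-1) - (q (x - s) - q a) * s ^ (α-1)) := by
        intro s
        linear_combination s ^ (α-1) * (hpq (x - s)) - s ^ (α-1) * (hpq a)
      rw [integral_congr (fun s _ => e s)]
      rw [integral_add ((ker_int hα 0 (x-a)).const_mul (F a))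
        ((Jaux_int hα hpm hpbd x 0 (x-a)).sub (Jaux_int hα hqm hqbd x 0 (x-a)))]
      rw [integral_sub (Jaux_int hα hpm hpbd x 0 (x-a)) (Jaux_int hα hqm hqbd x 0 (x-a))]
      rw [intervalIntegral.integral_const_mul, ker_integral hα, hFf haI]
      simp only [Jaux]
      ring
    simp only [RL]
    rw [step1, step2, step3]
  -- decompose RL f as a sum of three functions
  set c₁ : ℝ := f a / Real.Gamma (α + 1) with hc₁def
  set c₂ : ℝ := 1 / Real.Gamma α with hc₂def
  set G : ℝ → ℝ := fun x =>
    (c₁ * (x - a) ^ α + c₂ * Jaux a α p x) + (-c₂) * Jaux a α q x with hGdef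
  have hG : Set.EqOn (RL a α f) G (Set.Icc a b) := by
    intro x hx
    rw [hid x hx, hGdef]
    simp only [hc₁def, hc₂def]
    rw [hΓeq]; field_simp
    ring
  -- variation bounds for the pieces
  have hgmono : MonotoneOn (fun x : ℝ => (x - a) ^ α) (Set.Icc a b) := by
    intro u hu w hw huw
    exact Real.rpow_le_rpow (by linarith [hu.1]) (by linarith) hα.le
  have hVg_le : eVariationOn (fun x : ℝ => (x - a) ^ α) (Set.Icc a b)
      ≤ ENNReal.ofReal ((b - a) ^ α - (a - a) ^ α) := by
    have := hgmono.eVariationOn_le haI hbI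
    rwa [Set.inter_self] at this
  have hVg_fin : eVariationOn (fun x : ℝ => (x - a) ^ α) (Set.Icc a b) ≠ ⊤ :=
    ne_top_of_le_ne_top ENNReal.ofReal_ne_top hVg_le
  set tVg : ℝ := (eVariationOn (fun x : ℝ => (x - a) ^ α) (Set.Icc a b)).toReal with htVgdef
  have hJp_mono := Jaux_mono hab hα hpm hpbd hpmono
  have hJq_mono := Jaux_mono hab hα hqm hqbd hqmono
  have hVp_le : eVariationOn (Jaux a α p) (Set.Icc a b) ≤ ENNReal.ofReal (Jaux a α p b) := by
    have := hJp_mono.eVariationOn_le haI hbI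
    rwa [Set.inter_self, Jaux_self, sub_zero] at this
  have hVq_le : eVariationOn (Jaux a α q) (Set.Icc a b) ≤ ENNReal.ofReal (Jaux a α q b) := by
    have := hJq_mono.eVariationOn_le haI hbI
    rwa [Set.inter_self, Jaux_self, sub_zero] at this
  have hJpb_nonneg : 0 ≤ Jaux a α p b := by
    have := hJp_mono haI hbI hab.le
    rwa [Jaux_self] at this
  have hJqb_nonneg : 0 ≤ Jaux a α q b := by
    have := hJq_mono haI hbI hab.le
    rwa [Jaux_self] at this
  -- chain of variation inequalities
  have hchain : eVariationOn (RL a α f) (Set.Icc a b)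
      ≤ ENNReal.ofReal (|c₁| * tVg + (|c₂| * Jaux a α p b + |c₂| * Jaux a α q b)) := by
    calc eVariationOn (RL a α f) (Set.Icc a b)
        = eVariationOn G (Set.Icc a b) := eVariationOn.eq_of_eqOn hG
      _ ≤ eVariationOn (fun x => c₁ * (x - a) ^ α + c₂ * Jaux a α p x) (Set.Icc a b)
          + eVariationOn (fun x => (-c₂) * Jaux a α q x) (Set.Icc a b) := evar_add_le _ _ _
      _ ≤ (eVariationOn (fun x : ℝ => c₁ * (x - a) ^ α) (Set.Icc a b)
          + eVariationOn (fun x => c₂ * Jaux a α p x) (Set.Icc a b))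
          + eVariationOn (fun x => (-c₂) * Jaux a α q x) (Set.Icc a b) :=
            add_le_add_left (evar_add_le _ _ _) _
      _ ≤ (ENNReal.ofReal |c₁| * eVariationOn (fun x : ℝ => (x - a) ^ α) (Set.Icc a b)
          + ENNReal.ofReal |c₂| * eVariationOn (Jaux a α p) (Set.Icc a b))
          + ENNReal.ofReal |(-c₂)| * eVariationOn (Jaux a α q) (Set.Icc a b) :=
            add_le_add (add_le_add (evar_const_mul _ _ _) (evar_const_mul _ _ _))
              (evar_const_mul _ _ _)
      _ ≤ (ENNReal.ofReal |c₁| * ENNReal.ofReal tVg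
          + ENNReal.ofReal |c₂| * ENNReal.ofReal (Jaux a α p b))
          + ENNReal.ofReal |c₂| * ENNReal.ofReal (Jaux a α q b) := by
            rw [abs_neg]
            refine add_le_add (add_le_add ?_ (mul_le_mul_right hVp_le _))
              (mul_le_mul_right hVq_le _)
            rw [htVgdef, ENNReal.ofReal_toReal hVg_fin]
      _ = ENNReal.ofReal (|c₁| * tVg + (|c₂| * Jaux a α p b + |c₂| * Jaux a α q b)) := by
            have htVg0 : (0:ℝ) ≤ tVg := by rw [htVgdef]; exact ENNReal.toReal_nonneg
            rw [← ENNReal.ofReal_mul (abs_nonneg _), ← ENNReal.ofReal_mul (abs_nonneg _),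
              ← ENNReal.ofReal_mul (abs_nonneg _), add_assoc,
              ← ENNReal.ofReal_add (mul_nonneg (abs_nonneg _) hJpb_nonneg)
                (mul_nonneg (abs_nonneg _) hJqb_nonneg),
              ← ENNReal.ofReal_add (mul_nonneg (abs_nonneg _) htVg0)
                (add_nonneg (mul_nonneg (abs_nonneg _) hJpb_nonneg)
                  (mul_nonneg (abs_nonneg _) hJqb_nonneg))]
  refine le_trans hchain (ENNReal.ofReal_le_ofReal ?_)
  -- final real arithmetic
  have hc₁abs : |c₁| = |f a| / Real.Gamma (α + 1) := by
    rw [hc₁def, abs_div, abs_of_pos hΓ']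
  have hc₂abs : |c₂| = 1 / Real.Gamma α := by
    rw [hc₂def, abs_div, abs_of_pos hΓ, abs_one]
  have hsum : (p b - p a) + (q b - q a) = tV := by
    simp only [hpdef, hqdef]
    have : v b = tV := hvb
    have : v a = 0 := hva
    rw [hpdef, hqdef] at *
    linarith [hvb, hva]
  have hpbound := Jaux_bound hab hα hpm hpbd hpmono
  have hqbound := Jaux_bound hab hα hqm hqbd hqmono
  have hK : (0:ℝ) ≤ (b - a) ^ α / α :=
    div_nonneg (Real.rpow_nonneg (by linarith) α) hα.le
  have hpinc : 0 ≤ p b - p a := by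
    have := hpmono haI hbI hab.le; linarith
  have hqinc : 0 ≤ q b - q a := by
    have := hqmono haI hbI hab.le; linarith
  have h1 : |c₂| * Jaux a α p b + |c₂| * Jaux a α q b
      ≤ (1 / Real.Gamma α) * (tV * ((b - a) ^ α / α)) := by
    rw [hc₂abs]
    have h2 : Jaux a α p b + Jaux a α q b ≤ tV * ((b - a) ^ α / α) := by
      have := add_le_add hpbound hqbound
      calc Jaux a α p b + Jaux a α q b
          ≤ (p b - p a) * ((b - a) ^ α / α) + (q b - q a) * ((b - a) ^ α / α) := this
        _ = ((p b - p a) + (q b - q a)) * ((b - a) ^ α / α) := by ring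
        _ = tV * ((b - a) ^ α / α) := by rw [hsum]
    have hpos : (0:ℝ) < 1 / Real.Gamma α := by positivity
    nlinarith
  have heq : (1 / Real.Gamma α) * (tV * ((b - a) ^ α / α))
      = (b - a) ^ α / Real.Gamma (α + 1) * tV := by
    rw [hΓeq]; field_simp
  rw [hc₁abs]
  have : tVg / Real.Gamma (α + 1) * |f a| = |f a| / Real.Gamma (α + 1) * tVg := by ring
  rw [this] at *
  linarith [h1, heq.le, heq.ge]

theorem stmt_7 (a b α : ℝ) (ha : 0 < a) (hab : a < b) (hα : 0 < α) :
    -- the operator maps BV ∩ C into BV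
    (∀ f : ℝ → ℝ, BoundedVariationOn f (Set.Icc a b) → ContinuousOn f (Set.Icc a b) →
      BoundedVariationOn (RL a α f) (Set.Icc a b)) ∧
    -- linearity
    (∀ f g : ℝ → ℝ,
      BoundedVariationOn f (Set.Icc a b) → ContinuousOn f (Set.Icc a b) →
      BoundedVariationOn g (Set.Icc a b) → ContinuousOn g (Set.Icc a b) →
      ∀ x ∈ Set.Icc a b, RL a α (f + g) x = RL a α f x + RL a α g x) ∧
    (∀ f : ℝ → ℝ, ∀ c : ℝ,
      BoundedVariationOn f (Set.Icc a b) → ContinuousOn f (Set.Icc a b) →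
      ∀ x ∈ Set.Icc a b, RL a α (fun t => c * f t) x = c * RL a α f x) ∧
    -- boundedness with the explicit constant
    (∀ f : ℝ → ℝ, BoundedVariationOn f (Set.Icc a b) → ContinuousOn f (Set.Icc a b) →
      bvNorm a b (RL a α f) ≤
        2 * max ((eVariationOn (fun x => (x - a) ^ α) (Set.Icc a b)).toReal / Real.Gamma (α + 1))
            ((b - a) ^ α / Real.Gamma (α + 1)) * bvNorm a b f) := by
  have kerx : ∀ x : ℝ, IntervalIntegrable (fun t => (x - t) ^ (α - 1)) volume a x := by
    intro x
    have := (ker_int hα (x - a) 0).comp_sub_left x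
    simpa using this
  refine ⟨?_, ?_, ?_, ?_⟩
  · intro f hf hfc
    exact ne_top_of_le_ne_top ENNReal.ofReal_ne_top (main_aux a b α hab hα f hf hfc)
  · intro f g hf hfc hg hgc x hx
    have hax : a ≤ x := hx.1
    have hsub : Set.uIcc a x ⊆ Set.Icc a b := by
      rw [Set.uIcc_of_le hax]; exact Set.Icc_subset_Icc le_rfl hx.2
    have hif : IntervalIntegrable (fun t => (x - t) ^ (α - 1) * f t) volume a x :=
      (kerx x).mul_continuousOn (hfc.mono hsub)
    have hig : IntervalIntegrable (fun t => (x - t) ^ (α - 1) * g t) volume a x :=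
      (kerx x).mul_continuousOn (hgc.mono hsub)
    simp only [RL, Pi.add_apply]
    have e : ∀ t ∈ Set.uIcc a x, (fun t => (x - t) ^ (α - 1) * (f t + g t)) t
        = (fun t => (x - t) ^ (α - 1) * f t + (x - t) ^ (α - 1) * g t) t := by
      intro t _; simp only; ring
    rw [integral_congr e, integral_add hif hig]
    ring
  · intro f c hf hfc x hx
    simp only [RL]
    have e : ∀ t ∈ Set.uIcc a x, (fun t => (x - t) ^ (α - 1) * (c * f t)) t
        = (fun t => c * ((x - t) ^ (α - 1) * f t)) t := by
      intro t _; simp only; ring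
    rw [integral_congr e, intervalIntegral.integral_const_mul]
    ring
  · intro f hf hfc
    have hmain := main_aux a b α hab hα f hf hfc
    have hΓ' : 0 < Real.Gamma (α + 1) := Real.Gamma_pos_of_pos (by linarith)
    set A : ℝ := (eVariationOn (fun x => (x - a) ^ α) (Set.Icc a b)).toReal / Real.Gamma (α + 1)
      with hAdef
    set B : ℝ := (b - a) ^ α / Real.Gamma (α + 1) with hBdef
    have hA0 : 0 ≤ A := by
      rw [hAdef]; exact div_nonneg ENNReal.toReal_nonneg hΓ'.le
    have hB0 : 0 ≤ B := by
      rw [hBdef]; exact div_nonneg (Real.rpow_nonneg (by linarith) α) hΓ'.le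
    set tVf : ℝ := (eVariationOn f (Set.Icc a b)).toReal with htVfdef
    have htVf0 : 0 ≤ tVf := ENNReal.toReal_nonneg
    have h2 : (eVariationOn (RL a α f) (Set.Icc a b)).toReal ≤ A * |f a| + B * tVf :=
      ENNReal.toReal_le_of_le_ofReal
        (add_nonneg (mul_nonneg hA0 (abs_nonneg _)) (mul_nonneg hB0 htVf0)) hmain
    have hRLa : RL a α f a = 0 := by simp [RL]
    simp only [bvNorm, hRLa, abs_zero, zero_add]
    have hmaxA := le_max_left A B
    have hmaxB := le_max_right A B
    have habs : 0 ≤ |f a| := abs_nonneg _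
    nlinarith [mul_nonneg (le_trans hA0 hmaxA) habs, mul_nonneg (le_trans hA0 hmaxA) htVf0]
end

section
/- Let 0 < a < b < ∞, α > 0, f : [a,b] → ℝ continuous, and let a = x₀ < x₁ < ... < x_N = b be a partition. Then ∑_{i=1}^{N} |𝔍ₐ^α f(xᵢ) - 𝔍ₐ^α f(x_{i-1})| ≤ (‖f‖_∞ / Γ(α+1)) (b-a)^α + ((b-a)^α / Γ(α+1)) V(f,[a,b]). -/
open MeasureTheory

private lemma kernel_intble {α : ℝ} (hα : 0 < α) (x c d : ℝ) :
    IntervalIntegrable (fun t => (x - t) ^ (α - 1)) volume c d := by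
  have h : IntervalIntegrable (fun s : ℝ => s ^ (α - 1)) volume (x - c) (x - d) :=
    intervalIntegral.intervalIntegrable_rpow' (by linarith)
  simpa using h.comp_sub_left x

private lemma intble_bdd_mul {k φ : ℝ → ℝ} {c d : ℝ}
    (hk : IntervalIntegrable k volume c d) (hφ : Measurable φ) {C : ℝ}
    (hC : ∀ t, |φ t| ≤ C) : IntervalIntegrable (fun t => k t * φ t) volume c d := by
  rw [intervalIntegrable_iff] at hk ⊢
  have := hk.bdd_mul hφ.aestronglyMeasurable.restrict (c := C)
    (Filter.Eventually.of_forall fun t => by simpa using hC t)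
  exact (by simpa [mul_comm] using this : Integrable (fun t => k t * φ t) _)

private lemma kernel_integral {α : ℝ} (hα : 0 < α) {a x : ℝ} (hax : a ≤ x) :
    (∫ t in a..x, (x - t) ^ (α - 1)) = (x - a) ^ α / α := by
  have h := intervalIntegral.integral_comp_sub_left (fun s : ℝ => s ^ (α - 1)) x (a := a) (b := x)
  rw [h, sub_self, integral_rpow (Or.inl (by linarith))]
  rw [show α - 1 + 1 = α by ring, Real.zero_rpow hα.ne']
  ring

private lemma RL_subst {α : ℝ} (a x : ℝ) (P : ℝ → ℝ) :
    (∫ t in a..x, (x - t) ^ (α - 1) * P t)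
      = ∫ s in (0:ℝ)..(x - a), s ^ (α - 1) * P (x - s) := by
  have h := intervalIntegral.integral_comp_sub_left
    (fun s : ℝ => s ^ (α - 1) * P (x - s)) x (a := a) (b := x)
  simp only [sub_sub_cancel, sub_self] at h
  exact h

private lemma RL_mono {α : ℝ} (hα : 0 < α) (a : ℝ) {P : ℝ → ℝ} (hP : Monotone P)
    (hP0 : ∀ t, 0 ≤ P t) {C : ℝ} (hC : ∀ t, |P t| ≤ C)
    {x y : ℝ} (hax : a ≤ x) (hxy : x ≤ y) : RL a α P x ≤ RL a α P y := by
  have hΓ : 0 < Real.Gamma α := Real.Gamma_pos_of_pos hα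
  have hint : ∀ z c d : ℝ, IntervalIntegrable (fun s : ℝ => s ^ (α - 1) * P (z - s)) volume c d :=
    fun z c d => intble_bdd_mul (intervalIntegral.intervalIntegrable_rpow' (by linarith))
      (hP.measurable.comp (measurable_const.sub measurable_id)) (fun t => hC (z - t))
  have key : (∫ s in (0:ℝ)..(x - a), s ^ (α - 1) * P (x - s))
      ≤ ∫ s in (0:ℝ)..(y - a), s ^ (α - 1) * P (y - s) := by
    have step1 : (∫ s in (0:ℝ)..(x - a), s ^ (α - 1) * P (x - s))
        ≤ ∫ s in (0:ℝ)..(x - a), s ^ (α - 1) * P (y - s) := by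
      apply intervalIntegral.integral_mono_on (by linarith) (hint x 0 (x - a)) (hint y 0 (x - a))
      intro s hs
      exact mul_le_mul_of_nonneg_left (hP (by linarith)) (Real.rpow_nonneg hs.1 _)
    have step2 : (0:ℝ) ≤ ∫ s in (x - a)..(y - a), s ^ (α - 1) * P (y - s) := by
      apply intervalIntegral.integral_nonneg (by linarith)
      intro s hs
      exact mul_nonneg (Real.rpow_nonneg (by linarith [hs.1]) _) (hP0 _)
    have hadd := intervalIntegral.integral_add_adjacent_intervals
      (hint y 0 (x - a)) (hint y (x - a) (y - a))
    linarith
  unfold RL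
  rw [RL_subst a x P, RL_subst a y P]
  exact mul_le_mul_of_nonneg_left key (by positivity)

private lemma RL_le {α : ℝ} (hα : 0 < α) {a b : ℝ} (hab : a ≤ b) {P : ℝ → ℝ}
    (hP : Monotone P) {C : ℝ} (hC : ∀ t, |P t| ≤ C) :
    RL a α P b ≤ C * ((b - a) ^ α / Real.Gamma (α + 1)) := by
  have hΓ : 0 < Real.Gamma α := Real.Gamma_pos_of_pos hα
  have hK := kernel_intble hα b a b
  have hKP := intble_bdd_mul hK hP.measurable hC
  have hint : (∫ t in a..b, (b - t) ^ (α - 1) * P t)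
      ≤ ∫ t in a..b, (b - t) ^ (α - 1) * C := by
    apply intervalIntegral.integral_mono_on hab hKP (hK.mul_const C)
    intro t ht
    exact mul_le_mul_of_nonneg_left ((le_abs_self _).trans (hC t))
      (Real.rpow_nonneg (by linarith [ht.2]) _)
  have hval : (∫ t in a..b, (b - t) ^ (α - 1) * C) = (b - a) ^ α / α * C := by
    rw [intervalIntegral.integral_mul_const, kernel_integral hα hab]
  have hG : Real.Gamma (α + 1) = α * Real.Gamma α := Real.Gamma_add_one hα.ne'
  unfold RL
  calc (1 / Real.Gamma α) * ∫ t in a..b, (b - t) ^ (α - 1) * P t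
      ≤ (1 / Real.Gamma α) * ((b - a) ^ α / α * C) := by
        apply mul_le_mul_of_nonneg_left _ (by positivity)
        rw [← hval]; exact hint
    _ = C * ((b - a) ^ α / Real.Gamma (α + 1)) := by
        rw [hG]; field_simp

private lemma RL_decomp {a b α : ℝ} (hα : 0 < α) {f P Q : ℝ → ℝ}
    (hfPQ : ∀ t ∈ Set.Icc a b, f t = f a + P t - Q t)
    (hP : Monotone P) (hQ : Monotone Q) {CP CQ : ℝ}
    (hCP : ∀ t, |P t| ≤ CP) (hCQ : ∀ t, |Q t| ≤ CQ)
    {x : ℝ} (hx : x ∈ Set.Icc a b) :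
    RL a α f x = f a * RL a α (fun _ => 1) x + RL a α P x - RL a α Q x := by
  obtain ⟨hax, hxb⟩ := hx
  have hK := kernel_intble hα x a x
  have hKP := intble_bdd_mul hK hP.measurable hCP
  have hKQ := intble_bdd_mul hK hQ.measurable hCQ
  have hK1 : IntervalIntegrable (fun t => (x - t) ^ (α - 1) * f a) volume a x := hK.mul_const _
  have hcongr : (∫ t in a..x, (x - t) ^ (α - 1) * f t)
      = ∫ t in a..x, ((x - t) ^ (α - 1) * f a
          + ((x - t) ^ (α - 1) * P t - (x - t) ^ (α - 1) * Q t)) := by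
    apply intervalIntegral.integral_congr
    intro t ht
    rw [Set.uIcc_of_le hax] at ht
    have hft := hfPQ t ⟨ht.1, ht.2.trans hxb⟩
    dsimp only
    rw [hft]
    ring
  unfold RL
  rw [hcongr, intervalIntegral.integral_add hK1 (hKP.sub hKQ),
    intervalIntegral.integral_sub hKP hKQ, intervalIntegral.integral_mul_const]
  simp only [mul_one]
  ring

theorem stmt_8 (a b α : ℝ) (ha : 0 < a) (hab : a < b) (hα : 0 < α) (f : ℝ → ℝ)
    (hf : ContinuousOn f (Set.Icc a b))
    (N : ℕ) (hN : 0 < N) (x : ℕ → ℝ) (hx0 : x 0 = a) (hxN : x N = b)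
    (hmono : ∀ i < N, x i < x (i + 1)) :
    ∑ i ∈ Finset.range N, ENNReal.ofReal |RL a α f (x (i + 1)) - RL a α f (x i)| ≤
      ENNReal.ofReal ((sSup ((fun t => |f t|) '' Set.Icc a b) / Real.Gamma (α + 1)) *
        (b - a) ^ α) +
      ENNReal.ofReal ((b - a) ^ α / Real.Gamma (α + 1)) * eVariationOn f (Set.Icc a b) := by
  have hΓ' : 0 < Real.Gamma (α + 1) := Real.Gamma_pos_of_pos (by linarith)
  have hba : (0:ℝ) < (b - a) ^ α := Real.rpow_pos_of_pos (by linarith) α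
  by_cases hV : eVariationOn f (Set.Icc a b) = ⊤
  · have hne : ENNReal.ofReal ((b - a) ^ α / Real.Gamma (α + 1)) ≠ 0 := by
      rw [Ne, ENNReal.ofReal_eq_zero, not_le]
      positivity
    rw [hV, ENNReal.mul_top hne]
    simp
  -- bounded variation case
  have hBV : BoundedVariationOn f (Set.Icc a b) := hV
  have hLBV : LocallyBoundedVariationOn f (Set.Icc a b) := hBV.locallyBoundedVariationOn
  have haS : a ∈ Set.Icc a b := Set.left_mem_Icc.mpr hab.le
  have hbS : b ∈ Set.Icc a b := Set.right_mem_Icc.mpr hab.le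
  set v : ℝ → ℝ := variationOnFromTo f (Set.Icc a b) a with hv
  have key : ∀ ⦃u w : ℝ⦄, u ∈ Set.Icc a b → w ∈ Set.Icc a b → u ≤ w →
      |f w - f u| ≤ v w - v u := by
    intro u w hu hw huw
    have h1 : |f w - f u| ≤ variationOnFromTo f (Set.Icc a b) u w := by
      rw [variationOnFromTo.eq_of_le f _ huw, ← Real.dist_eq, dist_edist]
      apply ENNReal.toReal_mono (hLBV u w hu hw)
      exact eVariationOn.edist_le f ⟨hw, huw, le_rfl⟩ ⟨hu, le_rfl, huw⟩
    have h2 := variationOnFromTo.add hLBV haS hu hw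
    simp only [← hv] at h2
    linarith
  set c : ℝ → ℝ := fun z => max a (min b z) with hc
  have hcmono : Monotone c := fun z w hzw => max_le_max le_rfl (min_le_min le_rfl hzw)
  have hcmem : ∀ z, c z ∈ Set.Icc a b := fun z => ⟨le_max_left _ _,
    max_le hab.le (min_le_left _ _)⟩
  have hceq : ∀ z ∈ Set.Icc a b, c z = z := by
    intro z hz
    simp only [hc]
    rw [min_eq_right hz.2, max_eq_right hz.1]
  set p : ℝ → ℝ := fun z => (v (c z) + f (c z) - f a) / 2 with hp
  set q : ℝ → ℝ := fun z => (v (c z) - f (c z) + f a) / 2 with hq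
  have hva : v a = 0 := variationOnFromTo.self f _ a
  have hkey2 : ∀ ⦃u w : ℝ⦄, u ∈ Set.Icc a b → w ∈ Set.Icc a b → u ≤ w →
      v u + f u ≤ v w + f w ∧ v u - f u ≤ v w - f w := by
    intro u w hu hw huw
    have h := abs_le.mp (key hu hw huw)
    constructor <;> linarith [h.1, h.2]
  have hpmono : Monotone p := by
    intro z w hzw
    have h := (hkey2 (hcmem z) (hcmem w) (hcmono hzw)).1
    simp only [hp]; linarith
  have hqmono : Monotone q := by
    intro z w hzw
    have h := (hkey2 (hcmem z) (hcmem w) (hcmono hzw)).2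
    simp only [hq]; linarith
  have hp0 : ∀ z, 0 ≤ p z := by
    intro z
    have h := (hkey2 haS (hcmem z) (hcmem z).1).1
    simp only [hp]; linarith [hva]
  have hq0 : ∀ z, 0 ≤ q z := by
    intro z
    have h := (hkey2 haS (hcmem z) (hcmem z).1).2
    simp only [hq]; linarith [hva]
  set Cp : ℝ := (v b + f b - f a) / 2 with hCpdef
  set Cq : ℝ := (v b - f b + f a) / 2 with hCqdef
  have hCp : ∀ z, |p z| ≤ Cp := by
    intro z
    rw [abs_of_nonneg (hp0 z)]
    have h := (hkey2 (hcmem z) hbS (hcmem z).2).1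
    simp only [hp, hCpdef]; linarith
  have hCq : ∀ z, |q z| ≤ Cq := by
    intro z
    rw [abs_of_nonneg (hq0 z)]
    have h := (hkey2 (hcmem z) hbS (hcmem z).2).2
    simp only [hq, hCqdef]; linarith
  have hfPQ : ∀ t ∈ Set.Icc a b, f t = f a + p t - q t := by
    intro t ht
    simp only [hp, hq, hceq t ht]
    ring
  -- partition points
  have hstep : ∀ i < N, x i ≤ x (i + 1) := fun i hi => (hmono i hi).le
  have hx_le : ∀ i j, i ≤ j → j ≤ N → x i ≤ x j := by
    intro i j hij hjN
    induction j with
    | zero =>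
      have : i = 0 := Nat.le_zero.mp hij
      simp [this]
    | succ n ih =>
      rcases Nat.lt_or_ge i (n + 1) with h | h
      · exact (ih (by omega) (by omega)).trans (hstep n (by omega))
      · have : i = n + 1 := le_antisymm hij h
        simp [this]
  have hmem : ∀ i, i ≤ N → x i ∈ Set.Icc a b := by
    intro i hi
    exact ⟨hx0 ▸ hx_le 0 i (Nat.zero_le _) hi, hxN ▸ hx_le i N hi le_rfl⟩
  -- per-step bound
  have h1mono : Monotone (fun _ : ℝ => (1:ℝ)) := monotone_const
  have h10 : ∀ t : ℝ, (0:ℝ) ≤ (fun _ : ℝ => (1:ℝ)) t := fun _ => zero_le_one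
  have h1C : ∀ t : ℝ, |(fun _ : ℝ => (1:ℝ)) t| ≤ (1:ℝ) := fun _ => by simp
  set T : ℕ → ℝ := fun i =>
    |f a| * (RL a α (fun _ => 1) (x (i + 1)) - RL a α (fun _ => 1) (x i))
      + (RL a α p (x (i + 1)) - RL a α p (x i))
      + (RL a α q (x (i + 1)) - RL a α q (x i)) with hT
  have hTbound : ∀ i < N, |RL a α f (x (i + 1)) - RL a α f (x i)| ≤ T i := by
    intro i hi
    have hxi := hmem i hi.le
    have hxi1 := hmem (i + 1) hi
    have e1 := RL_decomp hα hfPQ hpmono hqmono hCp hCq hxi1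
    have e2 := RL_decomp hα hfPQ hpmono hqmono hCp hCq hxi
    have d1 : RL a α (fun _ => 1) (x i) ≤ RL a α (fun _ => 1) (x (i + 1)) :=
      RL_mono hα a h1mono h10 h1C hxi.1 (hstep i hi)
    have dp : RL a α p (x i) ≤ RL a α p (x (i + 1)) :=
      RL_mono hα a hpmono hp0 hCp hxi.1 (hstep i hi)
    have dq : RL a α q (x i) ≤ RL a α q (x (i + 1)) :=
      RL_mono hα a hqmono hq0 hCq hxi.1 (hstep i hi)
    rw [e1, e2, hT]
    set u := RL a α (fun _ : ℝ => (1:ℝ)) (x i)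
    set u' := RL a α (fun _ : ℝ => (1:ℝ)) (x (i + 1))
    set Pv := RL a α p (x i)
    set Pv' := RL a α p (x (i + 1))
    set Qv := RL a α q (x i)
    set Qv' := RL a α q (x (i + 1))
    have hre : f a * u' + Pv' - Qv' - (f a * u + Pv - Qv)
        = f a * (u' - u) + (Pv' - Pv) + -(Qv' - Qv) := by ring
    rw [hre]
    calc |f a * (u' - u) + (Pv' - Pv) + -(Qv' - Qv)|
        ≤ |f a * (u' - u)| + |Pv' - Pv| + |-(Qv' - Qv)| := abs_add_three _ _ _
      _ = |f a| * (u' - u) + (Pv' - Pv) + (Qv' - Qv) := by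
          rw [abs_mul, abs_of_nonneg (by linarith : (0:ℝ) ≤ u' - u),
            abs_of_nonneg (by linarith : (0:ℝ) ≤ Pv' - Pv), abs_neg,
            abs_of_nonneg (by linarith : (0:ℝ) ≤ Qv' - Qv)]
  have hT0 : ∀ i < N, 0 ≤ T i := fun i hi =>
    (abs_nonneg _).trans (hTbound i hi)
  -- telescoping
  have hRLa : ∀ g : ℝ → ℝ, RL a α g a = 0 := by
    intro g; simp [RL]
  have htel : ∀ F : ℝ → ℝ, ∑ i ∈ Finset.range N, (F (x (i + 1)) - F (x i)) = F b - F a := by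
    intro F
    rw [Finset.sum_range_sub (fun i => F (x i)), hxN, hx0]
  have hsumT : ∑ i ∈ Finset.range N, T i
      = |f a| * RL a α (fun _ => 1) b + RL a α p b + RL a α q b := by
    simp only [hT]
    rw [Finset.sum_add_distrib, Finset.sum_add_distrib, ← Finset.mul_sum,
      htel (RL a α (fun _ => 1)), htel (RL a α p), htel (RL a α q),
      hRLa, hRLa, hRLa]
    ring
  -- bounds at b
  have hD : (0:ℝ) ≤ (b - a) ^ α / Real.Gamma (α + 1) := by positivity
  have hb1 : RL a α (fun _ => 1) b ≤ 1 * ((b - a) ^ α / Real.Gamma (α + 1)) :=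
    RL_le hα hab.le h1mono h1C
  have hbp : RL a α p b ≤ Cp * ((b - a) ^ α / Real.Gamma (α + 1)) :=
    RL_le hα hab.le hpmono hCp
  have hbq : RL a α q b ≤ Cq * ((b - a) ^ α / Real.Gamma (α + 1)) :=
    RL_le hα hab.le hqmono hCq
  have hCpq : Cp + Cq = v b := by rw [hCpdef, hCqdef]; ring
  have hvb0 : 0 ≤ v b := variationOnFromTo.nonneg_of_le f _ hab.le
  -- sup bound
  have hBdd : BddAbove ((fun t => |f t|) '' Set.Icc a b) :=
    isCompact_Icc.bddAbove_image hf.abs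
  have hfaS : |f a| ≤ sSup ((fun t => |f t|) '' Set.Icc a b) :=
    le_csSup hBdd ⟨a, haS, rfl⟩
  have hS0 : 0 ≤ sSup ((fun t => |f t|) '' Set.Icc a b) := (abs_nonneg _).trans hfaS
  -- variation identification
  have hvbV : eVariationOn f (Set.Icc a b) = ENNReal.ofReal (v b) := by
    rw [hv, variationOnFromTo.eq_of_le f _ hab.le, Set.inter_self,
      ENNReal.ofReal_toReal hV]
  -- assemble
  calc ∑ i ∈ Finset.range N, ENNReal.ofReal |RL a α f (x (i + 1)) - RL a α f (x i)|
      ≤ ∑ i ∈ Finset.range N, ENNReal.ofReal (T i) := by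
        apply Finset.sum_le_sum
        intro i hi
        exact ENNReal.ofReal_le_ofReal (hTbound i (Finset.mem_range.mp hi))
    _ = ENNReal.ofReal (∑ i ∈ Finset.range N, T i) := by
        rw [ENNReal.ofReal_sum_of_nonneg (fun i hi => hT0 i (Finset.mem_range.mp hi))]
    _ ≤ ENNReal.ofReal ((sSup ((fun t => |f t|) '' Set.Icc a b) / Real.Gamma (α + 1)) *
          (b - a) ^ α + (b - a) ^ α / Real.Gamma (α + 1) * v b) := by
        apply ENNReal.ofReal_le_ofReal
        rw [hsumT]
        have m1 : |f a| * RL a α (fun _ => 1) b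
            ≤ |f a| * (1 * ((b - a) ^ α / Real.Gamma (α + 1))) :=
          mul_le_mul_of_nonneg_left hb1 (abs_nonneg _)
        have m2 : |f a| * (1 * ((b - a) ^ α / Real.Gamma (α + 1)))
            ≤ sSup ((fun t => |f t|) '' Set.Icc a b) * (1 * ((b - a) ^ α / Real.Gamma (α + 1))) :=
          mul_le_mul_of_nonneg_right hfaS (by positivity)
        have m3 : Cp * ((b - a) ^ α / Real.Gamma (α + 1))
            + Cq * ((b - a) ^ α / Real.Gamma (α + 1))
            = v b * ((b - a) ^ α / Real.Gamma (α + 1)) := by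
          rw [← hCpq]; ring
        have e1 : sSup ((fun t => |f t|) '' Set.Icc a b) *
            (1 * ((b - a) ^ α / Real.Gamma (α + 1)))
            = sSup ((fun t => |f t|) '' Set.Icc a b) / Real.Gamma (α + 1) * (b - a) ^ α := by
          ring
        have e2 : v b * ((b - a) ^ α / Real.Gamma (α + 1))
            = (b - a) ^ α / Real.Gamma (α + 1) * v b := by ring
        linarith [m1, m2, hbp, hbq, m3, e1, e2]
    _ ≤ ENNReal.ofReal ((sSup ((fun t => |f t|) '' Set.Icc a b) / Real.Gamma (α + 1)) *
          (b - a) ^ α) +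
        ENNReal.ofReal ((b - a) ^ α / Real.Gamma (α + 1)) * eVariationOn f (Set.Icc a b) := by
        rw [hvbV, ← ENNReal.ofReal_mul hD, ← ENNReal.ofReal_add (by positivity)
          (mul_nonneg hD hvb0)]
end

section
/- For a continuous function f : [a,b] → ℝ with partition points x_{i-1} < x_i in [a,b] and α > 0, the identity 𝔍ₐ^α f(xᵢ) - 𝔍ₐ^α f(x_{i-1}) = (1/Γ(α)) ∫ₐ^{xᵢ-x_{i-1}+a} (xᵢ-t)^{α-1} f(t) dt + (1/Γ(α)) ∫_{xᵢ-x_{i-1}+a}^{xᵢ} (xᵢ-t)^{α-1} [f(t) - f(t + x_{i-1} - xᵢ)] dt holds. -/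
theorem stmt_9 (a b α : ℝ) (hα : 0 < α) (f : ℝ → ℝ) (hf : ContinuousOn f (Set.Icc a b))
    (u v : ℝ) (hau : a ≤ u) (huv : u < v) (hvb : v ≤ b) :
    RL a α f v - RL a α f u =
      (1 / Real.Gamma α) * (∫ t in a..(v - u + a), (v - t) ^ (α - 1) * f t) +
      (1 / Real.Gamma α) *
        (∫ t in (v - u + a)..v, (v - t) ^ (α - 1) * (f t - f (t + u - v))) := by
  have hrpow : ∀ w z : ℝ, IntervalIntegrable (fun t => (v - t) ^ (α - 1))
      MeasureTheory.volume w z := by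
    intro w z
    have := (intervalIntegral.intervalIntegrable_rpow' (a := v - w) (b := v - z)
      (r := α - 1) (by linarith)).comp_sub_left v
    simpa using this
  have hint : ∀ w z : ℝ, a ≤ w → w ≤ z → z ≤ v →
      IntervalIntegrable (fun t => (v - t) ^ (α - 1) * f t) MeasureTheory.volume w z := by
    intro w z hw hwz hz
    refine (hrpow w z).mul_continuousOn (hf.mono ?_)
    rw [Set.uIcc_of_le hwz]
    exact Set.Icc_subset_Icc hw (le_trans hz hvb)
  have hint2 : IntervalIntegrable (fun t => (v - t) ^ (α - 1) * f (t + u - v))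
      MeasureTheory.volume (v - u + a) v := by
    refine (hrpow _ _).mul_continuousOn ?_
    have : ContinuousOn (fun t : ℝ => t + u - v) (Set.uIcc (v - u + a) v) := by fun_prop
    refine hf.comp this ?_
    rw [Set.uIcc_of_le (by linarith : v - u + a ≤ v)]
    intro x hx
    simp only [Set.mem_Icc] at hx
    exact ⟨by dsimp only; linarith [hx.1], by dsimp only; linarith [hx.2]⟩
  -- substitution for RL u
  have key : (∫ t in a..u, (u - t) ^ (α - 1) * f t) =
      ∫ t in (v - u + a)..v, (v - t) ^ (α - 1) * f (t + u - v) := by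
    have h1 : ∀ t : ℝ, (v - t) ^ (α - 1) * f (t + u - v) =
        (fun s => (u - s) ^ (α - 1) * f s) (t - (v - u)) := by
      intro t
      simp only []
      ring_nf
    calc (∫ t in a..u, (u - t) ^ (α - 1) * f t)
        = ∫ t in (v - u + a) - (v - u)..v - (v - u),
            (fun s => (u - s) ^ (α - 1) * f s) t := by norm_num
      _ = ∫ t in (v - u + a)..v, (fun s => (u - s) ^ (α - 1) * f s) (t - (v - u)) :=
          (intervalIntegral.integral_comp_sub_right _ (v - u)).symm
      _ = ∫ t in (v - u + a)..v, (v - t) ^ (α - 1) * f (t + u - v) := by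
          congr 1; ext t; rw [h1 t]
  have hsplit : (∫ t in a..v, (v - t) ^ (α - 1) * f t) =
      (∫ t in a..(v - u + a), (v - t) ^ (α - 1) * f t) +
      ∫ t in (v - u + a)..v, (v - t) ^ (α - 1) * f t :=
    (intervalIntegral.integral_add_adjacent_intervals
      (hint a (v - u + a) le_rfl (by linarith) (by linarith)) (hint (v - u + a) v (by linarith) (by linarith) le_rfl)).symm
  have hsub : (∫ t in (v - u + a)..v, (v - t) ^ (α - 1) * (f t - f (t + u - v))) =
      (∫ t in (v - u + a)..v, (v - t) ^ (α - 1) * f t) -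
      ∫ t in (v - u + a)..v, (v - t) ^ (α - 1) * f (t + u - v) := by
    rw [← intervalIntegral.integral_sub (hint (v - u + a) v (by linarith) (by linarith) le_rfl) hint2]
    congr 1; ext t; ring
  simp only [RL]
  rw [key, hsplit, hsub]
  ring
end

section
/- Let 0 < a < b < ∞, 0 < α < 1, and f : [a,b] → ℝ continuous. Then the set of unbounded variation points of 𝔍ₐ^α f is a subset of the set of unbounded variation points of f; in particular, the number of unbounded variation points of 𝔍ₐ^α f is at most that of f. -/
open Set MeasureTheory intervalIntegral

lemma bv_add {f g : ℝ → ℝ} {s : Set ℝ} (hf : BoundedVariationOn f s)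
    (hg : BoundedVariationOn g s) : BoundedVariationOn (fun x => f x + g x) s := by
  intro h
  have := evar_add_le f g s
  rw [h] at this
  exact (ENNReal.add_lt_top.2 ⟨hf.lt_top, hg.lt_top⟩).ne (top_le_iff.1 this)

lemma lip_const_mul (K : ℝ) : LipschitzWith ‖K‖₊ (fun y : ℝ => K * y) := by
  apply LipschitzWith.of_dist_le_mul
  intro x y
  simp only [Real.dist_eq, coe_nnnorm, Real.norm_eq_abs, ← mul_sub, abs_mul, le_refl]

lemma bv_const_mul (K : ℝ) {f : ℝ → ℝ} {s : Set ℝ} (hf : BoundedVariationOn f s) :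
    BoundedVariationOn (fun x => K * f x) s :=
  (lip_const_mul K).comp_boundedVariationOn hf

lemma bv_sub {f g : ℝ → ℝ} {s : Set ℝ} (hf : BoundedVariationOn f s)
    (hg : BoundedVariationOn g s) : BoundedVariationOn (fun x => f x - g x) s := by
  have := bv_add hf (bv_const_mul (-1) hg)
  simpa [sub_eq_add_neg] using this

lemma bv_of_monotoneOn_Icc {f : ℝ → ℝ} {c d : ℝ} (h : MonotoneOn f (Icc c d)) :
    BoundedVariationOn f (Icc c d) := by
  rcases le_or_gt c d with hcd | hcd
  · have h1 := h.eVariationOn_le (left_mem_Icc.2 hcd) (right_mem_Icc.2 hcd)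
    rw [inter_self] at h1
    exact (h1.trans_lt ENNReal.ofReal_lt_top).ne
  · rw [Icc_eq_empty hcd.not_ge]
    intro habs
    rw [eVariationOn.subsingleton f subsingleton_empty] at habs
    simp at habs

lemma bv_of_antitoneOn_Icc {f : ℝ → ℝ} {c d : ℝ} (h : AntitoneOn f (Icc c d)) :
    BoundedVariationOn f (Icc c d) := by
  have hm : MonotoneOn (fun x => -f x) (Icc c d) := fun x hx y hy hxy =>
    neg_le_neg (h hx hy hxy)
  have := bv_const_mul (-1) (bv_of_monotoneOn_Icc hm)
  simpa using this


lemma kernel_int {r : ℝ} (hr : -1 < r) (x u v : ℝ) :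
    IntervalIntegrable (fun t => (x - t) ^ r) volume u v := by
  have := (intervalIntegrable_rpow' (a := x - u) (b := x - v) hr).comp_sub_left x
  simpa using this

lemma II_bdd_mul {g φ : ℝ → ℝ} {u v M : ℝ} (hg : IntervalIntegrable g volume u v)
    (hφ : Measurable φ) (hM : ∀ t, |φ t| ≤ M) :
    IntervalIntegrable (fun t => g t * φ t) volume u v := by
  rw [intervalIntegrable_iff] at hg ⊢
  exact (hg.bdd_mul (c := M) hφ.aestronglyMeasurable.restrict
    (Filter.Eventually.of_forall fun t => by simpa using hM t)).congr
    (Filter.Eventually.of_forall fun t => mul_comm _ _)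

lemma antitone_part {r : ℝ} (hr : -1 < r) (hr0 : r < 0) {a c : ℝ} (hac : a ≤ c)
    {φ : ℝ → ℝ} (hφ : ContinuousOn φ (Icc a c)) (hφ0 : ∀ t ∈ Icc a c, 0 ≤ φ t) :
    AntitoneOn (fun x => ∫ t in a..c, (x - t) ^ r * φ t) (Ici c) := by
  intro x1 hx1 x2 hx2 h12
  have int : ∀ x, IntervalIntegrable (fun t => (x - t) ^ r * φ t) volume a c :=
    fun x => (kernel_int hr x a c).mul_continuousOn (by rwa [uIcc_of_le hac])
  refine integral_mono_ae_restrict hac (int x2) (int x1) ?_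
  have h0 : ∀ᵐ t ∂(volume.restrict (Icc a c)), t ≠ c := by
    refine ae_restrict_of_ae ?_
    rw [ae_iff]
    simpa using measure_singleton c
  filter_upwards [h0, ae_restrict_mem measurableSet_Icc] with t htc ht
  have htlt : t < c := lt_of_le_of_ne ht.2 htc
  have h1 : (0:ℝ) < x1 - t := by have := hx1; simp only [mem_Ici] at this; linarith
  have h2 : x1 - t ≤ x2 - t := by linarith
  exact mul_le_mul_of_nonneg_right
    (Real.rpow_le_rpow_of_nonpos h1 h2 hr0.le) (hφ0 t ht)

lemma monotone_part {r : ℝ} (hr : -1 < r) (hr0 : r < 0) {c M : ℝ} {φ : ℝ → ℝ}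
    (hφm : Monotone φ) (hφ0 : ∀ t, 0 ≤ φ t) (hφM : ∀ t, φ t ≤ M) (hmeas : Measurable φ) :
    MonotoneOn (fun x => ∫ t in c..x, (x - t) ^ r * φ t) (Ici c) := by
  have habs : ∀ t, |φ t| ≤ M := fun t => by rw [abs_of_nonneg (hφ0 t)]; exact hφM t
  have int : ∀ x u v : ℝ, IntervalIntegrable (fun t => (x - t) ^ r * φ t) volume u v :=
    fun x u v => II_bdd_mul (kernel_int hr x u v) hmeas habs
  intro x1 hx1 x2 hx2 h12
  simp only [mem_Ici] at hx1 hx2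
  show (∫ t in c..x1, (x1 - t) ^ r * φ t) ≤ ∫ t in c..x2, (x2 - t) ^ r * φ t
  set δ := x2 - x1 with hδ
  have hδ0 : 0 ≤ δ := by simp [hδ]; linarith
  have e1 : (∫ t in c..x1, (x1 - t) ^ r * φ t)
      = ∫ s in c + δ..x2, (x2 - s) ^ r * φ (s - δ) := by
    have := integral_comp_add_right (a := c) (b := x1)
      (fun s => (x2 - s) ^ r * φ (s - δ)) δ
    have hx : x1 + δ = x2 := by simp [hδ]
    rw [hx] at this
    rw [← this]
    refine integral_congr fun t _ => ?_
    have h1 : x2 - (t + δ) = x1 - t := by simp [hδ]; ring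
    have h2 : t + δ - δ = t := by ring
    rw [h1, h2]
  rw [e1]
  have intsh : ∀ u v : ℝ, IntervalIntegrable (fun s => (x2 - s) ^ r * φ (s - δ)) volume u v := by
    intro u v
    refine II_bdd_mul (kernel_int hr x2 u v) ?_ (fun t => habs _)
    exact hmeas.comp (measurable_id.sub measurable_const)
  have hc2 : c + δ ≤ x2 := by linarith
  have step1 : (∫ s in c + δ..x2, (x2 - s) ^ r * φ (s - δ))
      ≤ ∫ s in c + δ..x2, (x2 - s) ^ r * φ s := by
    refine integral_mono_on hc2 (intsh _ _) (int x2 _ _) fun s hs => ?_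
    have hker : 0 ≤ (x2 - s) ^ r := Real.rpow_nonneg (by linarith [hs.2]) r
    exact mul_le_mul_of_nonneg_left (hφm (by linarith)) hker
  have step2 : (∫ s in c + δ..x2, (x2 - s) ^ r * φ s)
      ≤ ∫ s in c..x2, (x2 - s) ^ r * φ s := by
    rw [← integral_add_adjacent_intervals (int x2 c (c + δ)) (int x2 (c + δ) x2)]
    have h0 : 0 ≤ ∫ s in c..c + δ, (x2 - s) ^ r * φ s := by
      refine integral_nonneg (by linarith) fun s hs => ?_
      exact mul_nonneg (Real.rpow_nonneg (by linarith [hs.2]) r) (hφ0 s)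
    linarith
  linarith




theorem stmt_14 (a b α : ℝ) (ha : 0 < a) (hab : a < b) (hα : 0 < α) (hα1 : α < 1)
    (f : ℝ → ℝ) (hf : ContinuousOn f (Set.Icc a b)) :
    {x ∈ Set.Icc a b | ¬ BVPoint a b (RL a α f) x} ⊆
      {x ∈ Set.Icc a b | ¬ BVPoint a b f x} := by
  rintro x ⟨hxab, hnot⟩
  refine ⟨hxab, fun hBV => hnot ?_⟩
  obtain ⟨c, d, hac, hcx, hxd, hdb, hcd, hc', hd', hfBV⟩ := hBV
  refine ⟨c, d, hac, hcx, hxd, hdb, hcd, hc', hd', ?_⟩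
  -- Setup
  set r := α - 1 with hrdef
  have hr : -1 < r := by rw [hrdef]; linarith
  have hr0 : r < 0 := by rw [hrdef]; linarith
  have hcd' : c ≤ d := hcd.le
  have hcb : c ≤ b := hcd'.trans hdb
  -- bound for f
  obtain ⟨M0, hM0⟩ := (isCompact_Icc (a := a) (b := b)).exists_bound_of_continuousOn hf
  set M := max M0 0 with hMdef
  have hM : ∀ t ∈ Icc a b, |f t| ≤ M := by
    intro t ht
    have : |f t| ≤ M0 := by simpa using hM0 t ht
    exact this.trans (le_max_left _ _)
  have hMnn : (0:ℝ) ≤ M := le_max_right _ _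
  -- Jordan decomposition of f on [c,d]
  obtain ⟨p, q, hp, hq, hpq⟩ :=
    hfBV.locallyBoundedVariationOn.exists_monotoneOn_sub_monotoneOn
  set K := p c - q c with hKdef
  set P := fun t => p (projIcc c d hcd' t) - p c + max K 0 with hPdef
  set Q := fun t => q (projIcc c d hcd' t) - q c + max (-K) 0 with hQdef
  have hcmem : c ∈ Icc c d := left_mem_Icc.2 hcd'
  have hdmem : d ∈ Icc c d := right_mem_Icc.2 hcd'
  have hPm : Monotone P := fun u v huv => by
    have := hp (projIcc c d hcd' u).2 (projIcc c d hcd' v).2 (monotone_projIcc hcd' huv)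
    simp only [hPdef]; linarith
  have hQm : Monotone Q := fun u v huv => by
    have := hq (projIcc c d hcd' u).2 (projIcc c d hcd' v).2 (monotone_projIcc hcd' huv)
    simp only [hQdef]; linarith
  have hP0 : ∀ t, 0 ≤ P t := fun t => by
    have := hp hcmem (projIcc c d hcd' t).2 (projIcc c d hcd' t).2.1
    have h2 := le_max_right K 0
    simp only [hPdef]; linarith
  have hQ0 : ∀ t, 0 ≤ Q t := fun t => by
    have := hq hcmem (projIcc c d hcd' t).2 (projIcc c d hcd' t).2.1
    have h2 := le_max_right (-K) 0
    simp only [hQdef]; linarith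
  have hPM : ∀ t, P t ≤ p d - p c + max K 0 := fun t => by
    have := hp (projIcc c d hcd' t).2 hdmem (projIcc c d hcd' t).2.2
    simp only [hPdef]; linarith
  have hQM : ∀ t, Q t ≤ q d - q c + max (-K) 0 := fun t => by
    have := hq (projIcc c d hcd' t).2 hdmem (projIcc c d hcd' t).2.2
    simp only [hQdef]; linarith
  have hPabs : ∀ t, |P t| ≤ p d - p c + max K 0 := fun t => by
    rw [abs_of_nonneg (hP0 t)]; exact hPM t
  have hQabs : ∀ t, |Q t| ≤ q d - q c + max (-K) 0 := fun t => by
    rw [abs_of_nonneg (hQ0 t)]; exact hQM t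
  have hfPQ : ∀ t ∈ Icc c d, f t = P t - Q t := by
    intro t ht
    have h1 : f t = p t - q t := by rw [hpq]; rfl
    have h2 : max K 0 - max (-K) 0 = K := max_zero_sub_max_neg_zero_eq_self K
    simp only [hPdef, hQdef, projIcc_of_mem hcd' ht, h1, hKdef] at *
    linarith
  -- the four pieces
  set g1 := fun y => ∫ t in a..c, (y - t) ^ r * (f t + M) with hg1def
  set g2 := fun y => ∫ t in a..c, (y - t) ^ r * M with hg2def
  set h1 := fun y => ∫ t in c..y, (y - t) ^ r * P t with hh1def
  set h2 := fun y => ∫ t in c..y, (y - t) ^ r * Q t with hh2def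
  have hfc : ContinuousOn f (Icc a c) := hf.mono (Icc_subset_Icc le_rfl hcb)
  have bg1 : BoundedVariationOn g1 (Icc c d) := by
    refine bv_of_antitoneOn_Icc (AntitoneOn.mono ?_ Icc_subset_Ici_self)
    refine antitone_part hr hr0 hac (hfc.add continuousOn_const) fun t ht => ?_
    have := hM t (Icc_subset_Icc le_rfl hcb ht)
    have := abs_le.1 this
    linarith [this.1]
  have bg2 : BoundedVariationOn g2 (Icc c d) := by
    refine bv_of_antitoneOn_Icc (AntitoneOn.mono ?_ Icc_subset_Ici_self)
    exact antitone_part hr hr0 hac continuousOn_const fun t _ => hMnn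
  have bh1 : BoundedVariationOn h1 (Icc c d) := by
    refine bv_of_monotoneOn_Icc (MonotoneOn.mono ?_ Icc_subset_Ici_self)
    exact monotone_part hr hr0 hPm hP0 hPM hPm.measurable
  have bh2 : BoundedVariationOn h2 (Icc c d) := by
    refine bv_of_monotoneOn_Icc (MonotoneOn.mono ?_ Icc_subset_Ici_self)
    exact monotone_part hr hr0 hQm hQ0 hQM hQm.measurable
  have hBVF : BoundedVariationOn
      (fun y => (1 / Real.Gamma α) * (g1 y - g2 y + (h1 y - h2 y))) (Icc c d) :=
    bv_const_mul _ (bv_add (bv_sub bg1 bg2) (bv_sub bh1 bh2))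
  -- RL agrees with the combination on [c,d]
  have hEq : EqOn (RL a α f)
      (fun y => (1 / Real.Gamma α) * (g1 y - g2 y + (h1 y - h2 y))) (Icc c d) := by
    intro y hy
    have hyb : y ≤ b := hy.2.trans hdb
    have i1 : IntervalIntegrable (fun t => (y - t) ^ r * f t) volume a c :=
      (kernel_int hr y a c).mul_continuousOn (by rw [uIcc_of_le hac]; exact hfc)
    have i2 : IntervalIntegrable (fun t => (y - t) ^ r * f t) volume c y :=
      (kernel_int hr y c y).mul_continuousOn
        (by rw [uIcc_of_le hy.1]; exact hf.mono (Icc_subset_Icc hac hyb))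
    have split : (∫ t in a..y, (y - t) ^ r * f t)
        = (∫ t in a..c, (y - t) ^ r * f t) + ∫ t in c..y, (y - t) ^ r * f t :=
      (integral_add_adjacent_intervals i1 i2).symm
    have iM : IntervalIntegrable (fun t => (y - t) ^ r * M) volume a c :=
      (kernel_int hr y a c).mul_continuousOn continuousOn_const
    have ifM : IntervalIntegrable (fun t => (y - t) ^ r * (f t + M)) volume a c :=
      (kernel_int hr y a c).mul_continuousOn
        (by rw [uIcc_of_le hac]; exact hfc.add continuousOn_const)
    have e_g : (∫ t in a..c, (y - t) ^ r * f t) = g1 y - g2 y := by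
      rw [hg1def, hg2def]
      rw [← integral_sub ifM iM]
      exact integral_congr fun t _ => by ring
    have iP : IntervalIntegrable (fun t => (y - t) ^ r * P t) volume c y :=
      II_bdd_mul (kernel_int hr y c y) hPm.measurable hPabs
    have iQ : IntervalIntegrable (fun t => (y - t) ^ r * Q t) volume c y :=
      II_bdd_mul (kernel_int hr y c y) hQm.measurable hQabs
    have e_h : (∫ t in c..y, (y - t) ^ r * f t) = h1 y - h2 y := by
      rw [hh1def, hh2def]
      rw [← integral_sub iP iQ]
      refine integral_congr fun t ht => ?_
      have ht' : t ∈ Icc c d := by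
        rw [uIcc_of_le hy.1] at ht
        exact Icc_subset_Icc le_rfl hy.2 ht
      rw [hfPQ t ht']; ring
    show RL a α f y = _
    rw [RL]
    simp only [← hrdef]
    rw [split, e_g, e_h]
  show eVariationOn (RL a α f) (Icc c d) ≠ ⊤
  rw [eVariationOn.eq_of_eqOn hEq]
  exact hBVF
end
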